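/- For the dcpo's P₁ and P₂ described in the context, the Scott space Σ(P₁ × P₂) of the product poset P₁ × P₂ is not sober. -/

import Mathlib

/-- A subset `D` is directed with respect to the relation `le`:
it is nonempty and any two elements have an upper bound in `D`. -/
def DirectedOn' {α : Type*} (le : α → α → Prop) (D : Set α) : Prop :=
  D.Nonempty ∧ ∀ x ∈ D, ∀ y ∈ D, ∃ z ∈ D, le x z ∧ le y z

/-- `u` is a least upper bound of `D` with respect to the relation `le`. -/
def IsLub' {α : Type*} (le : α → α → Prop) (D : Set α) (u : α) : Prop :=
  (∀ x ∈ D, le x u) ∧ ∀ v, (∀ x ∈ D, le x v) → le u v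

/-- Every directed subset has a least upper bound: `le` makes the carrier a dcpo. -/
def IsDcpoRel {α : Type*} (le : α → α → Prop) : Prop :=
  ∀ D : Set α, DirectedOn' le D → ∃ u, IsLub' le D u

/-- `U` is Scott open with respect to `le`: it is an upper set and every directed subset
whose least upper bound lies in `U` meets `U`. -/
def ScottOpen' {α : Type*} (le : α → α → Prop) (U : Set α) : Prop :=
  (∀ x y, le x y → x ∈ U → y ∈ U) ∧
    ∀ D u, DirectedOn' le D → IsLub' le D u → u ∈ U → (D ∩ U).Nonempty

/-- `A` is Scott closed with respect to `le`: it is a lower set and contains the least upper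
bounds of its directed subsets. -/
def ScottClosed' {α : Type*} (le : α → α → Prop) (A : Set α) : Prop :=
  (∀ x y, le x y → y ∈ A → x ∈ A) ∧
    ∀ D u, D ⊆ A → DirectedOn' le D → IsLub' le D u → u ∈ A

/-- Sobriety of the Scott space of `le`: the space is T₀ and every irreducible Scott closed
subset is the Scott closure `↓x = {y | le y x}` of a unique point `x`. -/
def SoberRel {α : Type*} (le : α → α → Prop) : Prop :=
  (∀ x y : α, (∀ U : Set α, ScottOpen' le U → (x ∈ U ↔ y ∈ U)) → x = y) ∧
    ∀ C : Set α, ScottClosed' le C → C.Nonempty →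
      (∀ A B : Set α, ScottClosed' le A → ScottClosed' le B → C ⊆ A ∪ B → C ⊆ A ∨ C ⊆ B) →
      ∃! x : α, C = {y | le y x}

/-! ### The posets `M`, `L`, `B`, `P₁`, `P₂` of Miao, Xi, Jia, Li, Zhao -/

/-- `ℕ^{<ℕ}`: nonempty finite words over `ℕ`. -/
abbrev NWord : Type := {l : List ℕ // l ≠ []}

/-- The prefix order on nonempty finite words. -/
def wordLE (v w : NWord) : Prop := v.1 <+: w.1

/-- The word of length 1 corresponding to a natural number. -/
def word1 (k : ℕ) : NWord := ⟨[k], by simp⟩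

/-- `s.k`: the word `s` extended by the letter `k`. -/
def wordSnoc (s : NWord) (k : ℕ) : NWord := ⟨s.1 ++ [k], by simp⟩

/-- The poset `M = ℕ ⊔ ℕ^{<ℕ}`, the disjoint sum of `ℕ` and the words. -/
abbrev Mt : Type := ℕ ⊕ NWord

/-- The (disjoint sum) order on `M`. -/
def Mle : Mt → Mt → Prop
  | Sum.inl a, Sum.inl b => a ≤ b
  | Sum.inr v, Sum.inr w => wordLE v w
  | _, _ => False

/-- The strict order on `M`. -/
def Mlt (x y : Mt) : Prop := Mle x y ∧ x ≠ y

/-- Pairs `(a, b)` of naturals with `a < b`. -/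
abbrev Pairt : Type := {p : ℕ × ℕ // p.1 < p.2}

/-- The poset `L = ({(a,b) : a < b} × M) ∪ {⊤}`; `none` is the top element `⊤` and
`some (p, x)` is the element `x_{a,b}` for `p = (a,b)`. -/
abbrev Lt : Type := Option (Pairt × Mt)

/-- The strict order on `L`: everything (other than `⊤`) is strictly below `⊤ = none`, and
`x_{a,b} < y_{a,b}` iff `x < y` in `M` (with the same tag `(a,b)`). -/
def Llt (u v : Lt) : Prop :=
  (u ≠ none ∧ v = none) ∨ ∃ p x y, u = some (p, x) ∧ v = some (p, y) ∧ Mlt x y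

/-- The carrier of the poset `B = ℕ × ℕ × L`. -/
abbrev Bt : Type := ℕ × ℕ × Lt

/-- `⊏₁`: `(m, n, ℓ) ⊏₁ (m, n, ℓ')` whenever `ℓ < ℓ'` in `L`. -/
def sq1 : Bt → Bt → Prop := fun x y =>
  ∃ m n u v, x = (m, n, u) ∧ y = (m, n, v) ∧ Llt u v

/-- `⊏₂`: `(a, n, x_{a,b}) ⊏₂ (f_{a,b}(x), n+1, ⊤)` for a word `x ∈ ℕ^{<ℕ}`. -/
def sq2 (f : Pairt → NWord → ℕ) : Bt → Bt → Prop := fun x y =>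
  ∃ (n : ℕ) (p : Pairt) (w : NWord),
    x = (p.1.1, n, some (p, Sum.inr w)) ∧ y = (f p w, n + 1, (none : Lt))

/-- `⊏₃`: `(b, n, x_{a,b}) ⊏₃ (f_{a,b}(x), n+1, ⊤)` for `x ∈ ℕ`, regarded as a word of
length 1. -/
def sq3 (f : Pairt → NWord → ℕ) : Bt → Bt → Prop := fun x y =>
  ∃ (n k : ℕ) (p : Pairt),
    x = (p.1.2, n, some (p, Sum.inl k)) ∧ y = (f p (word1 k), n + 1, (none : Lt))

/-- `⊏₄`: `(f_{a,b}(s), n, x_{a,b}) ⊏₄ (f_{a,b}(s.x), n, ⊤)` for a word `s` and `x ∈ ℕ`. -/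
def sq4 (f : Pairt → NWord → ℕ) : Bt → Bt → Prop := fun x y =>
  ∃ (n k : ℕ) (p : Pairt) (s : NWord),
    x = (f p s, n, some (p, Sum.inl k)) ∧ y = (f p (wordSnoc s k), n, (none : Lt))

/-- `⊏ = ⊏₁ ∪ ⊏₂ ∪ ⊏₃ ∪ ⊏₄ ∪ ⊏₁;⊏₂ ∪ ⊏₁;⊏₃ ∪ ⊏₁;⊏₄`. -/
def Bsq (f : Pairt → NWord → ℕ) : Bt → Bt → Prop := fun x y =>
  sq1 x y ∨ sq2 f x y ∨ sq3 f x y ∨ sq4 f x y ∨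
    (∃ z, sq1 x z ∧ sq2 f z y) ∨ (∃ z, sq1 x z ∧ sq3 f z y) ∨ (∃ z, sq1 x z ∧ sq4 f z y)

/-- The order `⊑` on `B`: the reflexive closure of `⊏`. -/
def Ble (f : Pairt → NWord → ℕ) (x y : Bt) : Prop := x = y ∨ Bsq f x y

/-- The hypotheses on the data `i`, `f`: `i` is an injection into `P(ℕ)` with pairwise
disjoint values satisfying `n < k` for all `k ∈ i (m, n)`, and each `f_{a,b}` is a monotone
injection of `ℕ^{<ℕ}` (with the prefix order) into `i (a, b)`. -/
structure IFData (i : Pairt → Set ℕ) (f : Pairt → NWord → ℕ) : Prop where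
  inj : Function.Injective i
  disj : ∀ p q : Pairt, p ≠ q → i p ∩ i q = ∅
  gt : ∀ p : Pairt, ∀ k ∈ i p, p.1.2 < k
  mem : ∀ p w, f p w ∈ i p
  finj : ∀ p, Function.Injective (f p)
  fmono : ∀ p v w, wordLE v w → f p v ≤ f p w

/-- The carrier of the poset `P₁ = (ℕ^ℕ × ℕ) ∪ B ∪ {⊤₁}`. -/
abbrev P1t : Type := ((ℕ → ℕ) × ℕ) ⊕ Bt ⊕ Unit

/-- The top element `⊤₁` of `P₁`. -/
def P1top : P1t := Sum.inr (Sum.inr ())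

/-- The inclusion of `B` into `P₁`. -/
def P1ofB (b : Bt) : P1t := Sum.inr (Sum.inl b)

/-- The strict order `<₁ ∪ <₂ ∪ <₃ ∪ <₄ ∪ <₁;<₃` of `P₁`:
`(g, n) <₁ (g, m)` iff `n < m`; `<₂` is `⊏` on `B`; `(g, n) <₃ (g(n), n, ⊤)`;
`x <₄ ⊤₁` for `x ≠ ⊤₁`; and `(g, n) <₁;<₃ (g(m), m, ⊤)` for `n < m`. -/
def P1lt (f : Pairt → NWord → ℕ) : P1t → P1t → Prop := fun x y =>
  (∃ (g : ℕ → ℕ) (n m : ℕ), x = Sum.inl (g, n) ∧ y = Sum.inl (g, m) ∧ n < m) ∨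
  (∃ b c : Bt, x = P1ofB b ∧ y = P1ofB c ∧ Bsq f b c) ∨
  (∃ (g : ℕ → ℕ) (n : ℕ), x = Sum.inl (g, n) ∧ y = P1ofB (g n, n, (none : Lt))) ∨
  (x ≠ P1top ∧ y = P1top) ∨
  (∃ (g : ℕ → ℕ) (n m : ℕ), x = Sum.inl (g, n) ∧ n < m ∧ y = P1ofB (g m, m, (none : Lt)))

/-- The order of `P₁`: the reflexive closure of the strict order. -/
def P1le (f : Pairt → NWord → ℕ) (x y : P1t) : Prop := x = y ∨ P1lt f x y

/-- `X = {g : ℕ → ⋃ₙ Eₙ : g(n) ∈ Eₙ}` where `Eₙ = i(φ(n))`. -/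
def Xt (i : Pairt → Set ℕ) (φ : ℕ → Pairt) : Type := {g : ℕ → ℕ // ∀ n, g n ∈ i (φ n)}

/-- The carrier of the poset `P₂ = (X × ℕ × ℕ) ∪ B ∪ {⊤₂}`. -/
abbrev P2t (i : Pairt → Set ℕ) (φ : ℕ → Pairt) : Type := (Xt i φ × ℕ × ℕ) ⊕ Bt ⊕ Unit

/-- The top element `⊤₂` of `P₂`. -/
def P2top (i : Pairt → Set ℕ) (φ : ℕ → Pairt) : P2t i φ := Sum.inr (Sum.inr ())

/-- The inclusion of `B` into `P₂`. -/
def P2ofB (i : Pairt → Set ℕ) (φ : ℕ → Pairt) (b : Bt) : P2t i φ := Sum.inr (Sum.inl b)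

/-- The strict order `<₁ ∪ <₂ ∪ <₃ ∪ <₄ ∪ <₁;<₃` of `P₂`:
`(g, n, k) <₁ (g, m, k)` iff `n < m`; `<₂` is `⊏` on `B`; `(g, n, k) <₃ (g(n), k, ⊤)`;
`x <₄ ⊤₂` for `x ≠ ⊤₂`; and `(g, n, k) <₁;<₃ (g(m), k, ⊤)` for `n < m`. -/
def P2lt (i : Pairt → Set ℕ) (φ : ℕ → Pairt) (f : Pairt → NWord → ℕ) :
    P2t i φ → P2t i φ → Prop := fun x y =>
  (∃ (g : Xt i φ) (n m k : ℕ), x = Sum.inl (g, n, k) ∧ y = Sum.inl (g, m, k) ∧ n < m) ∨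
  (∃ b c : Bt, x = P2ofB i φ b ∧ y = P2ofB i φ c ∧ Bsq f b c) ∨
  (∃ (g : Xt i φ) (n k : ℕ), x = Sum.inl (g, n, k) ∧ y = P2ofB i φ (g.1 n, k, (none : Lt))) ∨
  (x ≠ P2top i φ ∧ y = P2top i φ) ∨
  (∃ (g : Xt i φ) (n m k : ℕ), x = Sum.inl (g, n, k) ∧ n < m ∧
    y = P2ofB i φ (g.1 m, k, (none : Lt)))

/-- The order of `P₂`: the reflexive closure of the strict order. -/
def P2le (i : Pairt → Set ℕ) (φ : ℕ → Pairt) (f : Pairt → NWord → ℕ) (x y : P2t i φ) : Prop :=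
  x = y ∨ P2lt i φ f x y

/-- The componentwise order on the product poset `P₁ × P₂`. -/
def prodLe (i : Pairt → Set ℕ) (φ : ℕ → Pairt) (f : Pairt → NWord → ℕ)
    (x y : P1t × P2t i φ) : Prop :=
  P1le f x.1 y.1 ∧ P2le i φ f x.2 y.2


/-! ### Auxiliary development -/

section Aux

variable {i : Pairt → Set ℕ} {f : Pairt → NWord → ℕ} {φ : ℕ → Pairt}

lemma wordLE_refl (w : NWord) : wordLE w w := List.prefix_refl _

lemma wordLE_trans {u v w : NWord} (h1 : wordLE u v) (h2 : wordLE v w) : wordLE u w :=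
  List.IsPrefix.trans h1 h2

lemma wordLE_antisymm {u v : NWord} (h1 : wordLE u v) (h2 : wordLE v u) : u = v :=
  Subtype.ext (List.IsPrefix.eq_of_length h1 (le_antisymm h1.length_le h2.length_le))

lemma Mle_refl (x : Mt) : Mle x x := by cases x <;> simp [Mle, wordLE_refl]

lemma Mle_antisymm {x y : Mt} (h1 : Mle x y) (h2 : Mle y x) : x = y := by
  cases x <;> cases y <;> simp_all [Mle]
  · omega
  · exact wordLE_antisymm h1 h2

lemma Mlt_asymm {x y : Mt} (h1 : Mlt x y) (h2 : Mlt y x) : False :=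
  h1.2 (Mle_antisymm h1.1 h2.1)

lemma Mle_inl_iff {x : Mt} {t : ℕ} : Mle x (Sum.inl t) ↔ ∃ t', x = Sum.inl t' ∧ t' ≤ t := by
  cases x <;> simp [Mle]

lemma Mle_inr_iff {x : Mt} {v : NWord} :
    Mle x (Sum.inr v) ↔ ∃ v', x = Sum.inr v' ∧ wordLE v' v := by
  cases x <;> simp [Mle]

/-- `(e,m,⊤)` has no `⊏`-successor. -/
lemma bsq_none_no_succ {e m : ℕ} {c : Bt} (h : Bsq f (e, m, (none : Lt)) c) : False := by
  simp only [Bsq, sq1, sq2, sq3, sq4, Llt, Mlt, Prod.mk.injEq] at h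
  rcases h with h | h | h | h | h | h | h
  rotate_left 4
  iterate 3
    (obtain ⟨z, ⟨m', n', u, v, ⟨-, -, hu⟩, -, hlt⟩, -⟩ := h
     rcases hlt with ⟨hne, -⟩ | ⟨p, x, y, hx, -⟩
     · exact hne hu.symm
     · rw [← hu] at hx; exact nomatch hx)
  all_goals
    first
      | (obtain ⟨m', n', u, v, ⟨-, -, hu⟩, -, hlt⟩ := h
         rcases hlt with ⟨hne, -⟩ | ⟨p, x, y, hx, -⟩
         · exact hne hu.symm
         · rw [← hu] at hx; exact nomatch hx)
      | (obtain ⟨n, p, w, ⟨-, -, hu⟩, -⟩ := h; exact nomatch hu)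
      | (obtain ⟨n, k, p, ⟨-, -, hu⟩, -⟩ := h; exact nomatch hu)
      | (obtain ⟨n, k, p, s, ⟨-, -, hu⟩, -⟩ := h; exact nomatch hu)
      | (obtain ⟨z, ⟨m', n', u, v, ⟨-, -, hu⟩, -, hlt⟩, -⟩ := h
         rcases hlt with ⟨hne, -⟩ | ⟨p, x, y, hx, -⟩
         · exact hne hu.symm
         · rw [← hu] at hx; exact nomatch hx)

end Aux


section Char
variable {i : Pairt → Set ℕ} {f : Pairt → NWord → ℕ} {φ : ℕ → Pairt}

/-- The down-set of a top B-element `(e,m,⊤)`, described explicitly. -/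
def NoneBelow (f : Pairt → NWord → ℕ) (b : Bt) (e m : ℕ) : Prop :=
  b = (e, m, (none : Lt)) ∨
  (∃ (p : Pairt) (ξ : Mt), b = (e, m, some (p, ξ))) ∨
  (∃ (p : Pairt) (w v : NWord) (n : ℕ), m = n + 1 ∧ e = f p w ∧
      b = (p.1.1, n, some (p, Sum.inr v)) ∧ wordLE v w) ∨
  (∃ (p : Pairt) (k t n : ℕ), m = n + 1 ∧ e = f p (word1 k) ∧
      b = (p.1.2, n, some (p, Sum.inl t)) ∧ t ≤ k) ∨
  (∃ (p : Pairt) (s : NWord) (k t : ℕ), e = f p (wordSnoc s k) ∧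
      b = (f p s, m, some (p, Sum.inl t)) ∧ t ≤ k)

lemma ble_none_iff {b : Bt} {e m : ℕ} :
    Ble f b (e, m, (none : Lt)) ↔ NoneBelow f b e m := by
  constructor
  · rintro (rfl | h)
    · exact Or.inl rfl
    rcases h with h | h | h | h | ⟨z, hz, h⟩ | ⟨z, hz, h⟩ | ⟨z, hz, h⟩
    · obtain ⟨m₁, n₁, u, v, hb, hy, hlt⟩ := h
      simp only [Prod.mk.injEq] at hy
      obtain ⟨rfl, rfl, rfl⟩ := hy
      rcases hlt with ⟨hne, -⟩ | ⟨p, x, y, hx, hy, -⟩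
      · rcases hu : u with _ | ⟨p, ξ⟩
        · exact absurd hu hne
        · exact Or.inr (Or.inl ⟨p, ξ, by rw [hb, hu]⟩)
      · exact nomatch hy
    · obtain ⟨n, p, w, hb, hy⟩ := h
      simp only [Prod.mk.injEq] at hy
      obtain ⟨rfl, rfl, -⟩ := hy
      exact Or.inr (Or.inr (Or.inl ⟨p, w, w, n, rfl, rfl, hb, wordLE_refl w⟩))
    · obtain ⟨n, k, p, hb, hy⟩ := h
      simp only [Prod.mk.injEq] at hy
      obtain ⟨rfl, rfl, -⟩ := hy
      exact Or.inr (Or.inr (Or.inr (Or.inl ⟨p, k, k, n, rfl, rfl, hb, le_refl k⟩)))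
    · obtain ⟨n, k, p, s, hb, hy⟩ := h
      simp only [Prod.mk.injEq] at hy
      obtain ⟨rfl, rfl, -⟩ := hy
      exact Or.inr (Or.inr (Or.inr (Or.inr ⟨p, s, k, k, rfl, hb, le_refl k⟩)))
    · obtain ⟨m₁, n₁, u, v, hb, hz', hlt⟩ := hz
      obtain ⟨n, p, w, hz2, hy⟩ := h
      rw [hz'] at hz2
      simp only [Prod.mk.injEq] at hz2 hy
      obtain ⟨rfl, rfl, rfl⟩ := hz2
      obtain ⟨rfl, rfl, -⟩ := hy
      rcases hlt with ⟨-, h2⟩ | ⟨p', x, y, hx, hy2, hmlt⟩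
      · exact nomatch h2
      · simp only [Option.some.injEq, Prod.mk.injEq] at hy2
        obtain ⟨rfl, rfl⟩ := hy2
        obtain ⟨v', rfl, hle⟩ := Mle_inr_iff.mp hmlt.1
        exact Or.inr (Or.inr (Or.inl ⟨p, w, v', n₁, rfl, rfl, hx ▸ hb, hle⟩))
    · obtain ⟨m₁, n₁, u, v, hb, hz', hlt⟩ := hz
      obtain ⟨n, k, p, hz2, hy⟩ := h
      rw [hz'] at hz2
      simp only [Prod.mk.injEq] at hz2 hy
      obtain ⟨rfl, rfl, rfl⟩ := hz2
      obtain ⟨rfl, rfl, -⟩ := hy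
      rcases hlt with ⟨-, h2⟩ | ⟨p', x, y, hx, hy2, hmlt⟩
      · exact nomatch h2
      · simp only [Option.some.injEq, Prod.mk.injEq] at hy2
        obtain ⟨rfl, rfl⟩ := hy2
        obtain ⟨t', rfl, hle⟩ := Mle_inl_iff.mp hmlt.1
        exact Or.inr (Or.inr (Or.inr (Or.inl ⟨p, k, t', n₁, rfl, rfl, hx ▸ hb, hle⟩)))
    · obtain ⟨m₁, n₁, u, v, hb, hz', hlt⟩ := hz
      obtain ⟨n, k, p, s, hz2, hy⟩ := h
      rw [hz'] at hz2
      simp only [Prod.mk.injEq] at hz2 hy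
      obtain ⟨rfl, rfl, rfl⟩ := hz2
      obtain ⟨rfl, rfl, -⟩ := hy
      rcases hlt with ⟨-, h2⟩ | ⟨p', x, y, hx, hy2, hmlt⟩
      · exact nomatch h2
      · simp only [Option.some.injEq, Prod.mk.injEq] at hy2
        obtain ⟨rfl, rfl⟩ := hy2
        obtain ⟨t', rfl, hle⟩ := Mle_inl_iff.mp hmlt.1
        exact Or.inr (Or.inr (Or.inr (Or.inr ⟨p, s, k, t', rfl, hx ▸ hb, hle⟩)))
  · rintro (rfl | ⟨p, ξ, rfl⟩ | ⟨p, w, v, n, rfl, rfl, rfl, hle⟩ |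
        ⟨p, k, t, n, rfl, rfl, rfl, hle⟩ | ⟨p, s, k, t, rfl, rfl, hle⟩)
    · exact Or.inl rfl
    · exact Or.inr (Or.inl ⟨e, m, some (p, ξ), none, rfl, rfl,
        Or.inl ⟨(fun h => nomatch h), rfl⟩⟩)
    · by_cases hvw : v = w
      · subst hvw
        exact Or.inr (Or.inr (Or.inl ⟨n, p, v, rfl, rfl⟩))
      · refine Or.inr (Or.inr (Or.inr (Or.inr (Or.inr (Or.inl
          ⟨((p : Pairt).1.1, n, some (p, Sum.inr w)), ?_, ?_⟩)))))
        · exact ⟨p.1.1, n, some (p, Sum.inr v), some (p, Sum.inr w), rfl, rfl,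
            Or.inr ⟨p, Sum.inr v, Sum.inr w, rfl, rfl, ⟨hle, by simp [hvw]⟩⟩⟩
        · exact ⟨n, p, w, rfl, rfl⟩
    · rcases eq_or_lt_of_le hle with rfl | hlt
      · exact Or.inr (Or.inr (Or.inr (Or.inl ⟨n, t, p, rfl, rfl⟩)))
      · refine Or.inr (Or.inr (Or.inr (Or.inr (Or.inr (Or.inr (Or.inl
          ⟨((p : Pairt).1.2, n, some (p, Sum.inl k)), ?_, ?_⟩))))))
        · exact ⟨p.1.2, n, some (p, Sum.inl t), some (p, Sum.inl k), rfl, rfl,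
            Or.inr ⟨p, Sum.inl t, Sum.inl k, rfl, rfl, ⟨hle, by simp; omega⟩⟩⟩
        · exact ⟨n, k, p, rfl, rfl⟩
    · rcases eq_or_lt_of_le hle with rfl | hlt
      · exact Or.inr (Or.inr (Or.inr (Or.inr (Or.inl ⟨m, t, p, s, rfl, rfl⟩))))
      · refine Or.inr (Or.inr (Or.inr (Or.inr (Or.inr (Or.inr (Or.inr
          ⟨(f p s, m, some (p, Sum.inl k)), ?_, ?_⟩))))))
        · exact ⟨f p s, m, some (p, Sum.inl t), some (p, Sum.inl k), rfl, rfl,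
            Or.inr ⟨p, Sum.inl t, Sum.inl k, rfl, rfl, ⟨hle, by simp; omega⟩⟩⟩
        · exact ⟨m, k, p, s, rfl, rfl⟩

end Char


section PChar
variable {i : Pairt → Set ℕ} {f : Pairt → NWord → ℕ} {φ : ℕ → Pairt}

@[simp] lemma p1ofB_ne_top {b : Bt} : P1ofB b ≠ P1top := by simp [P1ofB, P1top]
@[simp] lemma p1ofB_ne_inl {b : Bt} {a} : P1ofB b ≠ Sum.inl a := by simp [P1ofB]
@[simp] lemma inl_ne_p1ofB {b : Bt} {a} : (Sum.inl a : P1t) ≠ P1ofB b := by simp [P1ofB]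
@[simp] lemma p1ofB_inj {b c : Bt} : P1ofB b = P1ofB c ↔ b = c := by simp [P1ofB]
@[simp] lemma inl_ne_top1 {a} : (Sum.inl a : P1t) ≠ P1top := by simp [P1top]
@[simp] lemma p2ofB_ne_top {b : Bt} : P2ofB i φ b ≠ P2top i φ := by simp [P2ofB, P2top]
@[simp] lemma p2ofB_ne_inl {b : Bt} {a} : P2ofB i φ b ≠ Sum.inl a := by simp [P2ofB]
@[simp] lemma inl_ne_p2ofB {b : Bt} {a} : (Sum.inl a : P2t i φ) ≠ P2ofB i φ b := by
  simp [P2ofB]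
@[simp] lemma p2ofB_inj {b c : Bt} : P2ofB i φ b = P2ofB i φ c ↔ b = c := by simp [P2ofB]
@[simp] lemma inl_ne_top2 {a} : (Sum.inl a : P2t i φ) ≠ P2top i φ := by simp [P2top]

lemma p1le_refl (x : P1t) : P1le f x x := Or.inl rfl
lemma p2le_refl (x : P2t i φ) : P2le i φ f x x := Or.inl rfl

lemma p1top_le {y : P1t} (h : P1le f P1top y) : y = P1top := by
  rcases h with rfl | h
  · rfl
  rcases h with ⟨g, n, m, hx, -⟩ | ⟨b, c, hx, -⟩ | ⟨g, n, hx, -⟩ | ⟨-, hy⟩ |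
    ⟨g, n, m, hx, -⟩
  · exact absurd hx.symm inl_ne_top1
  · exact absurd hx.symm p1ofB_ne_top
  · exact absurd hx.symm inl_ne_top1
  · exact hy
  · exact absurd hx.symm inl_ne_top1

lemma p2top_le {y : P2t i φ} (h : P2le i φ f (P2top i φ) y) : y = P2top i φ := by
  rcases h with rfl | h
  · rfl
  rcases h with ⟨g, n, m, k, hx, -⟩ | ⟨b, c, hx, -⟩ | ⟨g, n, k, hx, -⟩ | ⟨-, hy⟩ |
    ⟨g, n, m, k, hx, -⟩
  · exact absurd hx.symm inl_ne_top2
  · exact absurd hx.symm p2ofB_ne_top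
  · exact absurd hx.symm inl_ne_top2
  · exact hy
  · exact absurd hx.symm inl_ne_top2

lemma p1le_top (x : P1t) : P1le f x P1top := by
  by_cases h : x = P1top
  · exact Or.inl h
  · exact Or.inr (Or.inr (Or.inr (Or.inr (Or.inl ⟨h, rfl⟩))))

lemma p2le_top (x : P2t i φ) : P2le i φ f x (P2top i φ) := by
  by_cases h : x = P2top i φ
  · exact Or.inl h
  · exact Or.inr (Or.inr (Or.inr (Or.inr (Or.inl ⟨h, rfl⟩))))

/-- Characterization of the down-set of `(e,m,⊤)` in `P₁`. -/
lemma p1le_none_iff {x : P1t} {e m : ℕ} :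
    P1le f x (P1ofB (e, m, (none : Lt))) ↔
      (∃ b, x = P1ofB b ∧ NoneBelow f b e m) ∨
      (∃ (g : ℕ → ℕ) (n : ℕ), x = Sum.inl (g, n) ∧ n ≤ m ∧ g m = e) := by
  constructor
  · rintro (rfl | h)
    · exact Or.inl ⟨_, rfl, ble_none_iff.mp (Or.inl rfl)⟩
    rcases h with ⟨g, n, m', hx, hy, -⟩ | ⟨b, c, hx, hy, hbc⟩ | ⟨g, n, hx, hy⟩ |
      ⟨-, hy⟩ | ⟨g, n, m', hx, hnm, hy⟩
    · exact absurd hy p1ofB_ne_inl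
    · rw [p1ofB_inj] at hy
      exact Or.inl ⟨b, hx, ble_none_iff.mp (Or.inr (hy ▸ hbc))⟩
    · rw [p1ofB_inj, Prod.mk.injEq, Prod.mk.injEq] at hy
      obtain ⟨he, hmn, -⟩ := hy
      subst hmn
      exact Or.inr ⟨g, m, hx, le_refl m, he.symm⟩
    · exact absurd hy p1ofB_ne_top
    · rw [p1ofB_inj, Prod.mk.injEq, Prod.mk.injEq] at hy
      obtain ⟨he, hmn, -⟩ := hy
      subst hmn
      exact Or.inr ⟨g, n, hx, le_of_lt hnm, he.symm⟩
  · rintro (⟨b, rfl, hb⟩ | ⟨g, n, rfl, hnm, he⟩)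
    · rcases ble_none_iff.mpr hb with rfl | hsq
      · exact Or.inl rfl
      · exact Or.inr (Or.inr (Or.inl ⟨b, _, rfl, rfl, hsq⟩))
    · rcases eq_or_lt_of_le hnm with rfl | hlt
      · exact Or.inr (Or.inr (Or.inr (Or.inl ⟨g, n, rfl, by rw [he]⟩)))
      · exact Or.inr (Or.inr (Or.inr (Or.inr (Or.inr ⟨g, n, m, rfl, hlt, by rw [he]⟩))))

/-- Characterization of the down-set of `(e,m,⊤)` in `P₂`. -/
lemma p2le_none_iff {x : P2t i φ} {e m : ℕ} :
    P2le i φ f x (P2ofB i φ (e, m, (none : Lt))) ↔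
      (∃ b, x = P2ofB i φ b ∧ NoneBelow f b e m) ∨
      (∃ (h : Xt i φ) (n k : ℕ), x = Sum.inl (h, n, k) ∧ k = m ∧
        ∃ n', n ≤ n' ∧ h.1 n' = e) := by
  constructor
  · rintro (rfl | h)
    · exact Or.inl ⟨_, rfl, ble_none_iff.mp (Or.inl rfl)⟩
    rcases h with ⟨g, n, m', k, hx, hy, -⟩ | ⟨b, c, hx, hy, hbc⟩ | ⟨g, n, k, hx, hy⟩ |
      ⟨-, hy⟩ | ⟨g, n, m', k, hx, hnm, hy⟩
    · exact absurd hy p2ofB_ne_inl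
    · rw [p2ofB_inj] at hy
      exact Or.inl ⟨b, hx, ble_none_iff.mp (Or.inr (hy ▸ hbc))⟩
    · rw [p2ofB_inj, Prod.mk.injEq, Prod.mk.injEq] at hy
      exact Or.inr ⟨g, n, k, hx, hy.2.1.symm, ⟨n, le_refl n, hy.1.symm⟩⟩
    · exact absurd hy p2ofB_ne_top
    · rw [p2ofB_inj, Prod.mk.injEq, Prod.mk.injEq] at hy
      exact Or.inr ⟨g, n, k, hx, hy.2.1.symm, ⟨m', le_of_lt hnm, hy.1.symm⟩⟩
  · rintro (⟨b, rfl, hb⟩ | ⟨h, n, k, rfl, rfl, n', hnn', he⟩)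
    · rcases ble_none_iff.mpr hb with rfl | hsq
      · exact Or.inl rfl
      · exact Or.inr (Or.inr (Or.inl ⟨b, _, rfl, rfl, hsq⟩))
    · rcases eq_or_lt_of_le hnn' with rfl | hlt
      · exact Or.inr (Or.inr (Or.inr (Or.inl ⟨h, n, k, rfl, by rw [he]⟩)))
      · exact Or.inr (Or.inr (Or.inr (Or.inr (Or.inr ⟨h, n, n', k, rfl, hlt, by rw [he]⟩))))

/-- `(e,m,⊤)` is maximal in `P₁` below `⊤₁`. -/
lemma none_le₁ {e m : ℕ} {v : P1t} (h : P1le f (P1ofB (e, m, (none : Lt))) v) :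
    v = P1ofB (e, m, (none : Lt)) ∨ v = P1top := by
  rcases h with rfl | h
  · exact Or.inl rfl
  rcases h with ⟨g, n, m', hx, -⟩ | ⟨b, c, hx, hy, hbc⟩ | ⟨g, n, hx, -⟩ |
    ⟨-, hy⟩ | ⟨g, n, m', hx, -⟩
  · exact absurd hx p1ofB_ne_inl
  · rw [p1ofB_inj] at hx
    exact absurd (hx ▸ hbc) bsq_none_no_succ
  · exact absurd hx p1ofB_ne_inl
  · exact Or.inr hy
  · exact absurd hx p1ofB_ne_inl

lemma none_le₂ {e m : ℕ} {v : P2t i φ} (h : P2le i φ f (P2ofB i φ (e, m, (none : Lt))) v) :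
    v = P2ofB i φ (e, m, (none : Lt)) ∨ v = P2top i φ := by
  rcases h with rfl | h
  · exact Or.inl rfl
  rcases h with ⟨g, n, m', k, hx, -⟩ | ⟨b, c, hx, hy, hbc⟩ | ⟨g, n, k, hx, -⟩ |
    ⟨-, hy⟩ | ⟨g, n, m', k, hx, -⟩
  · exact absurd hx p2ofB_ne_inl
  · rw [p2ofB_inj] at hx
    exact absurd (hx ▸ hbc) bsq_none_no_succ
  · exact absurd hx p2ofB_ne_inl
  · exact Or.inr hy
  · exact absurd hx p2ofB_ne_inl

end PChar


section Trans
variable {i : Pairt → Set ℕ} {f : Pairt → NWord → ℕ} {φ : ℕ → Pairt}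

lemma bsq_to_some {b : Bt} {c n : ℕ} {p : Pairt} {ξ : Mt}
    (h : Bsq f b (c, n, some (p, ξ))) :
    ∃ ξ', b = (c, n, some (p, ξ')) ∧ Mlt ξ' ξ := by
  rcases h with h | h | h | h | ⟨z, hz, h⟩ | ⟨z, hz, h⟩ | ⟨z, hz, h⟩
  · obtain ⟨m₁, n₁, u, v, hb, hy, hlt⟩ := h
    simp only [Prod.mk.injEq] at hy
    obtain ⟨rfl, rfl, rfl⟩ := hy
    rcases hlt with ⟨-, h2⟩ | ⟨p', x, y, hx, hy2, hmlt⟩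
    · exact nomatch h2
    · simp only [Option.some.injEq, Prod.mk.injEq] at hy2
      obtain ⟨rfl, rfl⟩ := hy2
      exact ⟨x, hx ▸ hb, hmlt⟩
  · obtain ⟨n', p', w, -, hy⟩ := h
    simp only [Prod.mk.injEq] at hy
    exact absurd hy.2.2 (fun h => nomatch h)
  · obtain ⟨n', k, p', -, hy⟩ := h
    simp only [Prod.mk.injEq] at hy
    exact absurd hy.2.2 (fun h => nomatch h)
  · obtain ⟨n', k, p', s, -, hy⟩ := h
    simp only [Prod.mk.injEq] at hy
    exact absurd hy.2.2 (fun h => nomatch h)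
  · obtain ⟨n', p', w, -, hy⟩ := h
    simp only [Prod.mk.injEq] at hy
    exact absurd hy.2.2 (fun h => nomatch h)
  · obtain ⟨n', k, p', -, hy⟩ := h
    simp only [Prod.mk.injEq] at hy
    exact absurd hy.2.2 (fun h => nomatch h)
  · obtain ⟨n', k, p', s, -, hy⟩ := h
    simp only [Prod.mk.injEq] at hy
    exact absurd hy.2.2 (fun h => nomatch h)

lemma le_some₁ {a : P1t} {c n : ℕ} {p : Pairt} {ξ : Mt}
    (h : P1le f a (P1ofB (c, n, some (p, ξ)))) :
    a = P1ofB (c, n, some (p, ξ)) ∨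
      ∃ ξ', a = P1ofB (c, n, some (p, ξ')) ∧ Mlt ξ' ξ := by
  rcases h with rfl | h
  · exact Or.inl rfl
  rcases h with ⟨g, n', m', hx, hy, -⟩ | ⟨b, c', hx, hy, hbc⟩ | ⟨g, n', hx, hy⟩ |
    ⟨-, hy⟩ | ⟨g, n', m', hx, -, hy⟩
  · exact absurd hy p1ofB_ne_inl
  · rw [p1ofB_inj] at hy
    obtain ⟨ξ', hb, hm⟩ := bsq_to_some (hy ▸ hbc)
    exact Or.inr ⟨ξ', by rw [hx, hb], hm⟩
  · rw [p1ofB_inj, Prod.mk.injEq, Prod.mk.injEq] at hy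
    exact absurd hy.2.2 (fun h => nomatch h)
  · exact absurd hy p1ofB_ne_top
  · rw [p1ofB_inj, Prod.mk.injEq, Prod.mk.injEq] at hy
    exact absurd hy.2.2 (fun h => nomatch h)

lemma le_some₂ {a : P2t i φ} {c n : ℕ} {p : Pairt} {ξ : Mt}
    (h : P2le i φ f a (P2ofB i φ (c, n, some (p, ξ)))) :
    a = P2ofB i φ (c, n, some (p, ξ)) ∨
      ∃ ξ', a = P2ofB i φ (c, n, some (p, ξ')) ∧ Mlt ξ' ξ := by
  rcases h with rfl | h
  · exact Or.inl rfl
  rcases h with ⟨g, n', m', k, hx, hy, -⟩ | ⟨b, c', hx, hy, hbc⟩ | ⟨g, n', k, hx, hy⟩ |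
    ⟨-, hy⟩ | ⟨g, n', m', k, hx, -, hy⟩
  · exact absurd hy p2ofB_ne_inl
  · rw [p2ofB_inj] at hy
    obtain ⟨ξ', hb, hm⟩ := bsq_to_some (hy ▸ hbc)
    exact Or.inr ⟨ξ', by rw [hx, hb], hm⟩
  · rw [p2ofB_inj, Prod.mk.injEq, Prod.mk.injEq] at hy
    exact absurd hy.2.2 (fun h => nomatch h)
  · exact absurd hy p2ofB_ne_top
  · rw [p2ofB_inj, Prod.mk.injEq, Prod.mk.injEq] at hy
    exact absurd hy.2.2 (fun h => nomatch h)

lemma le_inl₁ {a : P1t} {g : ℕ → ℕ} {j : ℕ} (h : P1le f a (Sum.inl (g, j))) :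
    a = Sum.inl (g, j) ∨ ∃ j', j' < j ∧ a = Sum.inl (g, j') := by
  rcases h with rfl | h
  · exact Or.inl rfl
  rcases h with ⟨g', n', m', hx, hy, hlt⟩ | ⟨b, c', hx, hy, hbc⟩ | ⟨g', n', hx, hy⟩ |
    ⟨-, hy⟩ | ⟨g', n', m', hx, -, hy⟩
  · simp only [Sum.inl.injEq, Prod.mk.injEq] at hy
    obtain ⟨rfl, rfl⟩ := hy
    exact Or.inr ⟨n', hlt, hx⟩
  · exact absurd hy inl_ne_p1ofB
  · exact absurd hy inl_ne_p1ofB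
  · exact absurd hy inl_ne_top1
  · exact absurd hy inl_ne_p1ofB

lemma le_inl₂ {a : P2t i φ} {hh : Xt i φ} {j k : ℕ}
    (h : P2le i φ f a (Sum.inl (hh, j, k))) :
    a = Sum.inl (hh, j, k) ∨ ∃ j', j' < j ∧ a = Sum.inl (hh, j', k) := by
  rcases h with rfl | h
  · exact Or.inl rfl
  rcases h with ⟨g', n', m', k', hx, hy, hlt⟩ | ⟨b, c', hx, hy, hbc⟩ |
    ⟨g', n', k', hx, hy⟩ | ⟨-, hy⟩ | ⟨g', n', m', k', hx, -, hy⟩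
  · simp only [Sum.inl.injEq, Prod.mk.injEq] at hy
    obtain ⟨rfl, rfl, rfl⟩ := hy
    exact Or.inr ⟨n', hlt, hx⟩
  · exact absurd hy inl_ne_p2ofB
  · exact absurd hy inl_ne_p2ofB
  · exact absurd hy inl_ne_top2
  · exact absurd hy inl_ne_p2ofB

/-- targeted transitivity in `P₁`: anything below an element below `(e,m,⊤)` is below it. -/
lemma p1le_trans_none {a x : P1t} {e m : ℕ} (h1 : P1le f a x)
    (h2 : P1le f x (P1ofB (e, m, (none : Lt)))) :
    P1le f a (P1ofB (e, m, (none : Lt))) := by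
  rcases p1le_none_iff.mp h2 with ⟨b, rfl, hb⟩ | ⟨g, n, rfl, hnm, he⟩
  · rcases hb with rfl | ⟨p, ξ, rfl⟩ | ⟨p, w, v, n, rfl, rfl, rfl, hle⟩ |
      ⟨p, k, t, n, rfl, rfl, rfl, hle⟩ | ⟨p, s, k, t, he', rfl, hle⟩
    · exact h1
    · rcases le_some₁ h1 with rfl | ⟨ξ', rfl, -⟩
      · exact p1le_none_iff.mpr (Or.inl ⟨_, rfl, Or.inr (Or.inl ⟨p, ξ, rfl⟩)⟩)
      · exact p1le_none_iff.mpr (Or.inl ⟨_, rfl, Or.inr (Or.inl ⟨p, ξ', rfl⟩)⟩)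
    · rcases le_some₁ h1 with rfl | ⟨ξ', rfl, hm⟩
      · exact p1le_none_iff.mpr (Or.inl ⟨_, rfl,
          Or.inr (Or.inr (Or.inl ⟨p, w, v, n, rfl, rfl, rfl, hle⟩))⟩)
      · obtain ⟨v', rfl, hle'⟩ := Mle_inr_iff.mp hm.1
        exact p1le_none_iff.mpr (Or.inl ⟨_, rfl,
          Or.inr (Or.inr (Or.inl ⟨p, w, v', n, rfl, rfl, rfl, wordLE_trans hle' hle⟩))⟩)
    · rcases le_some₁ h1 with rfl | ⟨ξ', rfl, hm⟩
      · exact p1le_none_iff.mpr (Or.inl ⟨_, rfl,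
          Or.inr (Or.inr (Or.inr (Or.inl ⟨p, k, t, n, rfl, rfl, rfl, hle⟩)))⟩)
      · obtain ⟨t', rfl, hle'⟩ := Mle_inl_iff.mp hm.1
        exact p1le_none_iff.mpr (Or.inl ⟨_, rfl,
          Or.inr (Or.inr (Or.inr (Or.inl ⟨p, k, t', n, rfl, rfl, rfl, le_trans hle' hle⟩)))⟩)
    · rcases le_some₁ h1 with rfl | ⟨ξ', rfl, hm⟩
      · exact p1le_none_iff.mpr (Or.inl ⟨_, rfl,
          Or.inr (Or.inr (Or.inr (Or.inr ⟨p, s, k, t, he', rfl, hle⟩)))⟩)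
      · obtain ⟨t', rfl, hle'⟩ := Mle_inl_iff.mp hm.1
        exact p1le_none_iff.mpr (Or.inl ⟨_, rfl,
          Or.inr (Or.inr (Or.inr (Or.inr ⟨p, s, k, t', he', rfl, le_trans hle' hle⟩)))⟩)
  · rcases le_inl₁ h1 with rfl | ⟨j', hj', rfl⟩
    · exact p1le_none_iff.mpr (Or.inr ⟨g, n, rfl, hnm, he⟩)
    · exact p1le_none_iff.mpr (Or.inr ⟨g, j', rfl, le_trans (le_of_lt hj') hnm, he⟩)

/-- targeted transitivity in `P₂`. -/
lemma p2le_trans_none {a x : P2t i φ} {e m : ℕ} (h1 : P2le i φ f a x)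
    (h2 : P2le i φ f x (P2ofB i φ (e, m, (none : Lt)))) :
    P2le i φ f a (P2ofB i φ (e, m, (none : Lt))) := by
  rcases p2le_none_iff.mp h2 with ⟨b, rfl, hb⟩ | ⟨hh, n, k, rfl, rfl, n', hnn', he⟩
  · rcases hb with rfl | ⟨p, ξ, rfl⟩ | ⟨p, w, v, n, rfl, rfl, rfl, hle⟩ |
      ⟨p, k, t, n, rfl, rfl, rfl, hle⟩ | ⟨p, s, k, t, he', rfl, hle⟩
    · exact h1
    · rcases le_some₂ h1 with rfl | ⟨ξ', rfl, -⟩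
      · exact p2le_none_iff.mpr (Or.inl ⟨_, rfl, Or.inr (Or.inl ⟨p, ξ, rfl⟩)⟩)
      · exact p2le_none_iff.mpr (Or.inl ⟨_, rfl, Or.inr (Or.inl ⟨p, ξ', rfl⟩)⟩)
    · rcases le_some₂ h1 with rfl | ⟨ξ', rfl, hm⟩
      · exact p2le_none_iff.mpr (Or.inl ⟨_, rfl,
          Or.inr (Or.inr (Or.inl ⟨p, w, v, n, rfl, rfl, rfl, hle⟩))⟩)
      · obtain ⟨v', rfl, hle'⟩ := Mle_inr_iff.mp hm.1
        exact p2le_none_iff.mpr (Or.inl ⟨_, rfl,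
          Or.inr (Or.inr (Or.inl ⟨p, w, v', n, rfl, rfl, rfl, wordLE_trans hle' hle⟩))⟩)
    · rcases le_some₂ h1 with rfl | ⟨ξ', rfl, hm⟩
      · exact p2le_none_iff.mpr (Or.inl ⟨_, rfl,
          Or.inr (Or.inr (Or.inr (Or.inl ⟨p, k, t, n, rfl, rfl, rfl, hle⟩)))⟩)
      · obtain ⟨t', rfl, hle'⟩ := Mle_inl_iff.mp hm.1
        exact p2le_none_iff.mpr (Or.inl ⟨_, rfl,
          Or.inr (Or.inr (Or.inr (Or.inl ⟨p, k, t', n, rfl, rfl, rfl, le_trans hle' hle⟩)))⟩)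
    · rcases le_some₂ h1 with rfl | ⟨ξ', rfl, hm⟩
      · exact p2le_none_iff.mpr (Or.inl ⟨_, rfl,
          Or.inr (Or.inr (Or.inr (Or.inr ⟨p, s, k, t, he', rfl, hle⟩)))⟩)
      · obtain ⟨t', rfl, hle'⟩ := Mle_inl_iff.mp hm.1
        exact p2le_none_iff.mpr (Or.inl ⟨_, rfl,
          Or.inr (Or.inr (Or.inr (Or.inr ⟨p, s, k, t', he', rfl, le_trans hle' hle⟩)))⟩)
  · rcases le_inl₂ h1 with rfl | ⟨j', hj', rfl⟩
    · exact p2le_none_iff.mpr (Or.inr ⟨hh, n, _, rfl, rfl, n', hnn', he⟩)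
    · exact p2le_none_iff.mpr (Or.inr ⟨hh, j', _, rfl, rfl, n',
        le_trans (le_of_lt hj') hnn', he⟩)

end Trans


section CCdef
variable {i : Pairt → Set ℕ} {f : Pairt → NWord → ℕ} {φ : ℕ → Pairt}

/-- The "diagonal" point of the product determined by a top B-element. -/
def BD (i : Pairt → Set ℕ) (φ : ℕ → Pairt) (e m : ℕ) : P1t × P2t i φ :=
  (P1ofB (e, m, (none : Lt)), P2ofB i φ (e, m, (none : Lt)))

/-- The candidate irreducible closed set: the down-set of the diagonal top B-elements. -/
def CC (i : Pairt → Set ℕ) (φ : ℕ → Pairt) (f : Pairt → NWord → ℕ) :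
    Set (P1t × P2t i φ) :=
  {z | ∃ e m, prodLe i φ f z (BD i φ e m)}

lemma CC_lower {z z' : P1t × P2t i φ} (h : prodLe i φ f z' z) (hz : z ∈ CC i φ f) :
    z' ∈ CC i φ f := by
  obtain ⟨e, m, h1, h2⟩ := hz
  exact ⟨e, m, p1le_trans_none h.1 h1, p2le_trans_none h.2 h2⟩

lemma BD_mem_CC (e m : ℕ) : BD i φ e m ∈ CC i φ f :=
  ⟨e, m, p1le_refl _, p2le_refl _⟩

/-- measure of an element of `M`. -/
def msr : Mt → ℕ
  | Sum.inl t => t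
  | Sum.inr v => v.1.length

lemma mle_cases {x y : Mt} (h : Mle x y) :
    (∃ a b : ℕ, x = Sum.inl a ∧ y = Sum.inl b ∧ a ≤ b) ∨
    (∃ v w : NWord, x = Sum.inr v ∧ y = Sum.inr w ∧ wordLE v w) := by
  cases x <;> cases y <;> simp_all [Mle]

lemma msr_mono {x y : Mt} (h : Mle x y) : msr x ≤ msr y := by
  rcases mle_cases h with ⟨a, b, rfl, rfl, hab⟩ | ⟨v, w, rfl, rfl, hvw⟩
  · exact hab
  · exact hvw.length_le

lemma mle_eq_of_msr_le {x y : Mt} (h : Mle x y) (h2 : msr y ≤ msr x) : x = y := by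
  rcases mle_cases h with ⟨a, b, rfl, rfl, hab⟩ | ⟨v, w, rfl, rfl, hvw⟩
  · have hba : b ≤ a := h2
    rw [le_antisymm hab hba]
  · have hvw' : v = w :=
      Subtype.ext (List.IsPrefix.eq_of_length hvw (le_antisymm hvw.length_le h2))
    rw [hvw']

lemma llt_asymm {u v : Lt} (h1 : Llt u v) (h2 : Llt v u) : False := by
  rcases h1 with ⟨hne, rfl⟩ | ⟨p, x, y, rfl, rfl, hm1⟩
  · rcases h2 with ⟨hne2, -⟩ | ⟨p, x, y, habs, -⟩
    · exact hne2 rfl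
    · exact nomatch habs
  · rcases h2 with ⟨-, habs⟩ | ⟨p', x', y', he1, he2, hm2⟩
    · exact nomatch habs
    · simp only [Option.some.injEq, Prod.mk.injEq] at he1 he2
      obtain ⟨rfl, rfl⟩ := he1
      obtain ⟨-, rfl⟩ := he2
      exact Mlt_asymm hm1 hm2

/-- A `⊏`-step either lands on a top B-element or is an `sq1`-step between non-tops. -/
lemma bsq_target {u v : Bt} (h : Bsq f u v) :
    (∃ e m, v = (e, m, (none : Lt))) ∨ sq1 u v := by
  rcases h with h | h | h | h | ⟨z, hz, h⟩ | ⟨z, hz, h⟩ | ⟨z, hz, h⟩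
  · exact Or.inr h
  · obtain ⟨n, p, w, -, rfl⟩ := h; exact Or.inl ⟨_, _, rfl⟩
  · obtain ⟨n, k, p, -, rfl⟩ := h; exact Or.inl ⟨_, _, rfl⟩
  · obtain ⟨n, k, p, s, -, rfl⟩ := h; exact Or.inl ⟨_, _, rfl⟩
  · obtain ⟨n, p, w, -, rfl⟩ := h; exact Or.inl ⟨_, _, rfl⟩
  · obtain ⟨n, k, p, -, rfl⟩ := h; exact Or.inl ⟨_, _, rfl⟩
  · obtain ⟨n, k, p, s, -, rfl⟩ := h; exact Or.inl ⟨_, _, rfl⟩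

lemma bsq_asymm {b c : Bt} (h1 : Bsq f b c) (h2 : Bsq f c b) : False := by
  rcases bsq_target (f := f) h1 with ⟨e, m, rfl⟩ | hs1
  · exact bsq_none_no_succ h2
  rcases bsq_target (f := f) h2 with ⟨e, m, rfl⟩ | hs2
  · exact bsq_none_no_succ h1
  obtain ⟨m, n, u, v, rfl, hc, hlt1⟩ := hs1
  obtain ⟨m', n', u', v', hc', hb, hlt2⟩ := hs2
  rw [hc] at hc'
  simp only [Prod.mk.injEq] at hc' hb
  obtain ⟨rfl, rfl, rfl⟩ := hc'
  obtain ⟨-, -, rfl⟩ := hb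
  exact llt_asymm hlt1 hlt2

lemma p1le_antisymm {x y : P1t} (h1 : P1le f x y) (h2 : P1le f y x) : x = y := by
  rcases h1 with rfl | h1
  · rfl
  rcases h2 with rfl | h2
  · rfl
  exfalso
  rcases h1 with ⟨g, n, m, rfl, rfl, hlt⟩ | ⟨b, c, rfl, rfl, hbc⟩ | ⟨g, n, rfl, rfl⟩ |
    ⟨hne, rfl⟩ | ⟨g, n, m, rfl, hnm, rfl⟩
  · rcases le_inl₁ (f := f) (Or.inr h2) with heq | ⟨j', hj', heq⟩
    · simp only [Sum.inl.injEq, Prod.mk.injEq] at heq; omega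
    · simp only [Sum.inl.injEq, Prod.mk.injEq] at heq; omega
  · exact bsq_asymm hbc (by
      rcases h2 with ⟨g, n, m, habs, -⟩ | ⟨b', c', hx', hy', hbc'⟩ | ⟨g, n, habs, -⟩ |
        ⟨-, habs⟩ | ⟨g, n, m, habs, -⟩
      · exact absurd habs p1ofB_ne_inl
      · rw [p1ofB_inj] at hx' hy'
        rw [← hx', ← hy'] at hbc'
        exact hbc'
      · exact absurd habs p1ofB_ne_inl
      · exact absurd habs p1ofB_ne_top
      · exact absurd habs p1ofB_ne_inl)
  · rcases le_inl₁ (f := f) (Or.inr h2) with heq | ⟨j', hj', heq⟩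
    · exact absurd heq p1ofB_ne_inl
    · exact absurd heq p1ofB_ne_inl
  · rw [p1top_le (f := f) (Or.inr h2)] at hne
    exact hne rfl
  · rcases le_inl₁ (f := f) (Or.inr h2) with heq | ⟨j', hj', heq⟩
    · exact absurd heq p1ofB_ne_inl
    · exact absurd heq p1ofB_ne_inl

lemma p2le_antisymm {x y : P2t i φ} (h1 : P2le i φ f x y) (h2 : P2le i φ f y x) : x = y := by
  rcases h1 with rfl | h1
  · rfl
  rcases h2 with rfl | h2
  · rfl
  exfalso
  rcases h1 with ⟨g, n, m, k, rfl, rfl, hlt⟩ | ⟨b, c, rfl, rfl, hbc⟩ |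
    ⟨g, n, k, rfl, rfl⟩ | ⟨hne, rfl⟩ | ⟨g, n, m, k, rfl, hnm, rfl⟩
  · rcases le_inl₂ (f := f) (Or.inr h2) with heq | ⟨j', hj', heq⟩
    · simp only [Sum.inl.injEq, Prod.mk.injEq] at heq; omega
    · simp only [Sum.inl.injEq, Prod.mk.injEq] at heq; omega
  · exact bsq_asymm hbc (by
      rcases h2 with ⟨g, n, m, k, habs, -⟩ | ⟨b', c', hx', hy', hbc'⟩ |
        ⟨g, n, k, habs, -⟩ | ⟨-, habs⟩ | ⟨g, n, m, k, habs, -⟩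
      · exact absurd habs p2ofB_ne_inl
      · rw [p2ofB_inj] at hx' hy'
        rw [← hx', ← hy'] at hbc'
        exact hbc'
      · exact absurd habs p2ofB_ne_inl
      · exact absurd habs p2ofB_ne_top
      · exact absurd habs p2ofB_ne_inl)
  · rcases le_inl₂ (f := f) (Or.inr h2) with heq | ⟨j', hj', heq⟩
    · exact absurd heq p2ofB_ne_inl
    · exact absurd heq p2ofB_ne_inl
  · rw [p2top_le (f := f) (Or.inr h2)] at hne
    exact hne rfl
  · rcases le_inl₂ (f := f) (Or.inr h2) with heq | ⟨j', hj', heq⟩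
    · exact absurd heq p2ofB_ne_inl
    · exact absurd heq p2ofB_ne_inl

/-- up-set of a `ℕ^ℕ × ℕ` element of `P₁`. -/
lemma inl_le_u₁ {g : ℕ → ℕ} {j : ℕ} {v : P1t} (h : P1le f (Sum.inl (g, j)) v) :
    v = Sum.inl (g, j) ∨ (∃ m, j < m ∧ v = Sum.inl (g, m)) ∨
    (∃ n, j ≤ n ∧ v = P1ofB (g n, n, (none : Lt))) ∨ v = P1top := by
  rcases h with rfl | h
  · exact Or.inl rfl
  rcases h with ⟨g', n', m', hx, hy, hlt⟩ | ⟨b, c', hx, -, -⟩ | ⟨g', n', hx, hy⟩ |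
    ⟨-, hy⟩ | ⟨g', n', m', hx, hlt, hy⟩
  · simp only [Sum.inl.injEq, Prod.mk.injEq] at hx
    obtain ⟨rfl, rfl⟩ := hx
    exact Or.inr (Or.inl ⟨m', hlt, hy⟩)
  · exact absurd hx inl_ne_p1ofB
  · simp only [Sum.inl.injEq, Prod.mk.injEq] at hx
    obtain ⟨rfl, rfl⟩ := hx
    exact Or.inr (Or.inr (Or.inl ⟨j, le_refl j, hy⟩))
  · exact Or.inr (Or.inr (Or.inr hy))
  · simp only [Sum.inl.injEq, Prod.mk.injEq] at hx
    obtain ⟨rfl, rfl⟩ := hx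
    exact Or.inr (Or.inr (Or.inl ⟨m', le_of_lt hlt, hy⟩))

/-- up-set of an `X × ℕ × ℕ` element of `P₂`. -/
lemma inl_le_u₂ {hh : Xt i φ} {j k : ℕ} {v : P2t i φ}
    (h : P2le i φ f (Sum.inl (hh, j, k)) v) :
    v = Sum.inl (hh, j, k) ∨ (∃ m, j < m ∧ v = Sum.inl (hh, m, k)) ∨
    (∃ n, j ≤ n ∧ v = P2ofB i φ (hh.1 n, k, (none : Lt))) ∨ v = P2top i φ := by
  rcases h with rfl | h
  · exact Or.inl rfl
  rcases h with ⟨g', n', m', k', hx, hy, hlt⟩ | ⟨b, c', hx, -, -⟩ |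
    ⟨g', n', k', hx, hy⟩ | ⟨-, hy⟩ | ⟨g', n', m', k', hx, hlt, hy⟩
  · simp only [Sum.inl.injEq, Prod.mk.injEq] at hx
    obtain ⟨rfl, rfl, rfl⟩ := hx
    exact Or.inr (Or.inl ⟨m', hlt, hy⟩)
  · exact absurd hx inl_ne_p2ofB
  · simp only [Sum.inl.injEq, Prod.mk.injEq] at hx
    obtain ⟨rfl, rfl, rfl⟩ := hx
    exact Or.inr (Or.inr (Or.inl ⟨j, le_refl j, hy⟩))
  · exact Or.inr (Or.inr (Or.inr hy))
  · simp only [Sum.inl.injEq, Prod.mk.injEq] at hx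
    obtain ⟨rfl, rfl, rfl⟩ := hx
    exact Or.inr (Or.inr (Or.inl ⟨m', le_of_lt hlt, hy⟩))

end CCdef


section Trich
variable {i : Pairt → Set ℕ} {f : Pairt → NWord → ℕ} {φ : ℕ → Pairt}

lemma no_none_mem₁ {S : Set P1t}
    (hdir : ∀ x ∈ S, ∀ y ∈ S, ∃ z ∈ S, P1le f x z ∧ P1le f y z)
    (htop : P1top ∉ S) (hnogr : ∀ z ∈ S, ∃ s ∈ S, ¬ P1le f s z)
    {e m : ℕ} (hmem : P1ofB (e, m, (none : Lt)) ∈ S) : False := by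
  obtain ⟨s, hs, hns⟩ := hnogr _ hmem
  obtain ⟨z, hz, hsz, hez⟩ := hdir s hs _ hmem
  rcases none_le₁ hez with rfl | rfl
  · exact hns hsz
  · exact htop hz

lemma no_none_mem₂ {S : Set (P2t i φ)}
    (hdir : ∀ x ∈ S, ∀ y ∈ S, ∃ z ∈ S, P2le i φ f x z ∧ P2le i φ f y z)
    (htop : P2top i φ ∉ S) (hnogr : ∀ z ∈ S, ∃ s ∈ S, ¬ P2le i φ f s z)
    {e m : ℕ} (hmem : P2ofB i φ (e, m, (none : Lt)) ∈ S) : False := by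
  obtain ⟨s, hs, hns⟩ := hnogr _ hmem
  obtain ⟨z, hz, hsz, hez⟩ := hdir s hs _ hmem
  rcases none_le₂ hez with rfl | rfl
  · exact hns hsz
  · exact htop hz

/-- Classification of directed subsets of `P₁` without greatest element and without `⊤₁`. -/
lemma trichotomy₁ {S : Set P1t} (hne : S.Nonempty)
    (hdir : ∀ x ∈ S, ∀ y ∈ S, ∃ z ∈ S, P1le f x z ∧ P1le f y z)
    (htop : P1top ∉ S) (hnogr : ∀ z ∈ S, ∃ s ∈ S, ¬ P1le f s z) :
    (∃ g : ℕ → ℕ, (∀ x ∈ S, ∃ n, x = Sum.inl (g, n)) ∧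
       ∀ N, ∃ n, N < n ∧ Sum.inl (g, n) ∈ S) ∨
    (∃ (c n : ℕ) (p : Pairt), (∀ x ∈ S, ∃ ξ, x = P1ofB (c, n, some (p, ξ))) ∧
       ∀ N, ∃ ξ, N < msr ξ ∧ P1ofB (c, n, some (p, ξ)) ∈ S) := by
  have h1 : ∀ x ∈ S, (∃ g j, x = Sum.inl (g, j)) ∨
      (∃ c n p ξ, x = P1ofB (c, n, some (p, ξ))) := by
    intro x hx
    rcases x with ⟨g, j⟩ | b | u
    · exact Or.inl ⟨g, j, rfl⟩
    · obtain ⟨c, nn, ℓ⟩ := b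
      rcases ℓ with _ | ⟨p, ξ⟩
      · exact absurd hx (fun h => no_none_mem₁ hdir htop hnogr h)
      · exact Or.inr ⟨c, nn, p, ξ, rfl⟩
    · exact absurd hx (by cases u; exact htop)
  by_cases hK : ∃ g j, Sum.inl (g, j) ∈ S
  · left
    obtain ⟨g, j, hgj⟩ := hK
    have hall : ∀ x ∈ S, ∃ n, x = Sum.inl (g, n) := by
      intro x hx
      obtain ⟨z, hz, hxz, hgz⟩ := hdir x hx _ hgj
      rcases inl_le_u₁ hgz with rfl | ⟨m, -, rfl⟩ | ⟨n', -, rfl⟩ | rfl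
      · rcases le_inl₁ hxz with rfl | ⟨j', -, rfl⟩
        · exact ⟨j, rfl⟩
        · exact ⟨j', rfl⟩
      · rcases le_inl₁ hxz with rfl | ⟨j', -, rfl⟩
        · exact ⟨m, rfl⟩
        · exact ⟨j', rfl⟩
      · exact absurd hz (fun h => no_none_mem₁ hdir htop hnogr h)
      · exact absurd hz htop
    refine ⟨g, hall, ?_⟩
    have hstep : ∀ n, Sum.inl (g, n) ∈ S → ∃ n', n < n' ∧ Sum.inl (g, n') ∈ S := by
      intro n hn
      obtain ⟨s, hs, hns⟩ := hnogr _ hn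
      obtain ⟨n', rfl⟩ := hall s hs
      refine ⟨n', ?_, hs⟩
      by_contra hle
      push_neg at hle
      apply hns
      rcases eq_or_lt_of_le hle with rfl | hlt
      · exact p1le_refl _
      · exact Or.inr (Or.inl ⟨g, n', n, rfl, rfl, hlt⟩)
    intro N
    induction N with
    | zero =>
      obtain ⟨n', h1', h2'⟩ := hstep j hgj
      exact ⟨n', by omega, h2'⟩
    | succ N ih =>
      obtain ⟨n, hn, hmem⟩ := ih
      obtain ⟨n', h1', h2'⟩ := hstep n hmem
      exact ⟨n', by omega, h2'⟩
  · right
    obtain ⟨x₀, hx₀⟩ := hne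
    have hallB : ∀ x ∈ S, ∃ c n p ξ, x = P1ofB (c, n, some (p, ξ)) := by
      intro x hx
      rcases h1 x hx with ⟨g, j, rfl⟩ | h
      · exact absurd ⟨g, j, hx⟩ hK
      · exact h
    obtain ⟨c, n, p, ξ₀, hx₀eq⟩ := hallB x₀ hx₀
    subst hx₀eq
    have hfib : ∀ x ∈ S, ∃ ξ, x = P1ofB (c, n, some (p, ξ)) := by
      intro x hx
      obtain ⟨z, hz, hxz, h0z⟩ := hdir x hx _ hx₀
      obtain ⟨c', n', p', ξ', rfl⟩ := hallB z hz
      have hcc : c' = c ∧ n' = n ∧ p' = p := by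
        rcases le_some₁ h0z with heq | ⟨ξ'', heq, -⟩ <;>
        · rw [p1ofB_inj] at heq
          simp only [Prod.mk.injEq, Option.some.injEq] at heq
          exact ⟨heq.1.symm, heq.2.1.symm, heq.2.2.1.symm⟩
      obtain ⟨rfl, rfl, rfl⟩ := hcc
      rcases le_some₁ hxz with rfl | ⟨ξ'', rfl, -⟩
      · exact ⟨ξ', rfl⟩
      · exact ⟨ξ'', rfl⟩
    refine ⟨c, n, p, hfib, ?_⟩
    have hstep : ∀ ξ, P1ofB (c, n, some (p, ξ)) ∈ S →
        ∃ ξ', msr ξ < msr ξ' ∧ P1ofB (c, n, some (p, ξ')) ∈ S := by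
      intro ξ hξ
      obtain ⟨s, hs, hns⟩ := hnogr _ hξ
      obtain ⟨z, hz, hsz, hξz⟩ := hdir s hs _ hξ
      obtain ⟨ξz, rfl⟩ := hfib z hz
      refine ⟨ξz, ?_, hz⟩
      by_contra hle
      push_neg at hle
      have hmle : Mle ξ ξz := by
        rcases le_some₁ hξz with heq | ⟨ξ'', heq, hm⟩
        · rw [p1ofB_inj] at heq
          simp only [Prod.mk.injEq, Option.some.injEq] at heq
          rw [← heq.2.2.2]
          exact Mle_refl ξ
        · rw [p1ofB_inj] at heq
          simp only [Prod.mk.injEq, Option.some.injEq] at heq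
          rw [← heq.2.2.2] at hm
          exact hm.1
      have heq := mle_eq_of_msr_le hmle hle
      subst heq
      exact hns hsz
    intro N
    induction N with
    | zero =>
      obtain ⟨ξ', h1', h2'⟩ := hstep ξ₀ hx₀
      exact ⟨ξ', by omega, h2'⟩
    | succ N ih =>
      obtain ⟨ξ, hn, hmem⟩ := ih
      obtain ⟨ξ', h1', h2'⟩ := hstep ξ hmem
      exact ⟨ξ', by omega, h2'⟩

/-- Classification of directed subsets of `P₂` without greatest element and without `⊤₂`. -/
lemma trichotomy₂ {S : Set (P2t i φ)} (hne : S.Nonempty)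
    (hdir : ∀ x ∈ S, ∀ y ∈ S, ∃ z ∈ S, P2le i φ f x z ∧ P2le i φ f y z)
    (htop : P2top i φ ∉ S) (hnogr : ∀ z ∈ S, ∃ s ∈ S, ¬ P2le i φ f s z) :
    (∃ (hh : Xt i φ) (k : ℕ), (∀ x ∈ S, ∃ n, x = Sum.inl (hh, n, k)) ∧
       ∀ N, ∃ n, N < n ∧ Sum.inl (hh, n, k) ∈ S) ∨
    (∃ (c n : ℕ) (p : Pairt), (∀ x ∈ S, ∃ ξ, x = P2ofB i φ (c, n, some (p, ξ))) ∧
       ∀ N, ∃ ξ, N < msr ξ ∧ P2ofB i φ (c, n, some (p, ξ)) ∈ S) := by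
  have h1 : ∀ x ∈ S, (∃ hh j k, x = Sum.inl (hh, j, k)) ∨
      (∃ c n p ξ, x = P2ofB i φ (c, n, some (p, ξ))) := by
    intro x hx
    rcases x with ⟨hh, j, k⟩ | b | u
    · exact Or.inl ⟨hh, j, k, rfl⟩
    · obtain ⟨c, nn, ℓ⟩ := b
      rcases ℓ with _ | ⟨p, ξ⟩
      · exact absurd hx (fun h => no_none_mem₂ hdir htop hnogr h)
      · exact Or.inr ⟨c, nn, p, ξ, rfl⟩
    · exact absurd hx (by cases u; exact htop)
  by_cases hK : ∃ hh j k, (Sum.inl (hh, j, k) : P2t i φ) ∈ S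
  · left
    obtain ⟨hh, j, k, hgj⟩ := hK
    have hall : ∀ x ∈ S, ∃ n, x = Sum.inl (hh, n, k) := by
      intro x hx
      obtain ⟨z, hz, hxz, hgz⟩ := hdir x hx _ hgj
      rcases inl_le_u₂ hgz with rfl | ⟨m, -, rfl⟩ | ⟨n', -, rfl⟩ | rfl
      · rcases le_inl₂ hxz with rfl | ⟨j', -, rfl⟩
        · exact ⟨j, rfl⟩
        · exact ⟨j', rfl⟩
      · rcases le_inl₂ hxz with rfl | ⟨j', -, rfl⟩
        · exact ⟨m, rfl⟩
        · exact ⟨j', rfl⟩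
      · exact absurd hz (fun h => no_none_mem₂ hdir htop hnogr h)
      · exact absurd hz htop
    refine ⟨hh, k, hall, ?_⟩
    have hstep : ∀ n, (Sum.inl (hh, n, k) : P2t i φ) ∈ S →
        ∃ n', n < n' ∧ (Sum.inl (hh, n', k) : P2t i φ) ∈ S := by
      intro n hn
      obtain ⟨s, hs, hns⟩ := hnogr _ hn
      obtain ⟨n', rfl⟩ := hall s hs
      refine ⟨n', ?_, hs⟩
      by_contra hle
      push_neg at hle
      apply hns
      rcases eq_or_lt_of_le hle with rfl | hlt
      · exact p2le_refl _
      · exact Or.inr (Or.inl ⟨hh, n', n, k, rfl, rfl, hlt⟩)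
    intro N
    induction N with
    | zero =>
      obtain ⟨n', h1', h2'⟩ := hstep j hgj
      exact ⟨n', by omega, h2'⟩
    | succ N ih =>
      obtain ⟨n, hn, hmem⟩ := ih
      obtain ⟨n', h1', h2'⟩ := hstep n hmem
      exact ⟨n', by omega, h2'⟩
  · right
    obtain ⟨x₀, hx₀⟩ := hne
    have hallB : ∀ x ∈ S, ∃ c n p ξ, x = P2ofB i φ (c, n, some (p, ξ)) := by
      intro x hx
      rcases h1 x hx with ⟨hh, j, k, rfl⟩ | h
      · exact absurd ⟨hh, j, k, hx⟩ hK
      · exact h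
    obtain ⟨c, n, p, ξ₀, hx₀eq⟩ := hallB x₀ hx₀
    subst hx₀eq
    have hfib : ∀ x ∈ S, ∃ ξ, x = P2ofB i φ (c, n, some (p, ξ)) := by
      intro x hx
      obtain ⟨z, hz, hxz, h0z⟩ := hdir x hx _ hx₀
      obtain ⟨c', n', p', ξ', rfl⟩ := hallB z hz
      have hcc : c' = c ∧ n' = n ∧ p' = p := by
        rcases le_some₂ h0z with heq | ⟨ξ'', heq, -⟩ <;>
        · rw [p2ofB_inj] at heq
          simp only [Prod.mk.injEq, Option.some.injEq] at heq
          exact ⟨heq.1.symm, heq.2.1.symm, heq.2.2.1.symm⟩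
      obtain ⟨rfl, rfl, rfl⟩ := hcc
      rcases le_some₂ hxz with rfl | ⟨ξ'', rfl, -⟩
      · exact ⟨ξ', rfl⟩
      · exact ⟨ξ'', rfl⟩
    refine ⟨c, n, p, hfib, ?_⟩
    have hstep : ∀ ξ, P2ofB i φ (c, n, some (p, ξ)) ∈ S →
        ∃ ξ', msr ξ < msr ξ' ∧ P2ofB i φ (c, n, some (p, ξ')) ∈ S := by
      intro ξ hξ
      obtain ⟨s, hs, hns⟩ := hnogr _ hξ
      obtain ⟨z, hz, hsz, hξz⟩ := hdir s hs _ hξ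
      obtain ⟨ξz, rfl⟩ := hfib z hz
      refine ⟨ξz, ?_, hz⟩
      by_contra hle
      push_neg at hle
      have hmle : Mle ξ ξz := by
        rcases le_some₂ hξz with heq | ⟨ξ'', heq, hm⟩
        · rw [p2ofB_inj] at heq
          simp only [Prod.mk.injEq, Option.some.injEq] at heq
          rw [← heq.2.2.2]
          exact Mle_refl ξ
        · rw [p2ofB_inj] at heq
          simp only [Prod.mk.injEq, Option.some.injEq] at heq
          rw [← heq.2.2.2] at hm
          exact hm.1
      have hkey := mle_eq_of_msr_le hmle hle
      subst hkey
      exact hns hsz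
    intro N
    induction N with
    | zero =>
      obtain ⟨ξ', h1', h2'⟩ := hstep ξ₀ hx₀
      exact ⟨ξ', by omega, h2'⟩
    | succ N ih =>
      obtain ⟨ξ, hn, hmem⟩ := ih
      obtain ⟨ξ', h1', h2'⟩ := hstep ξ hmem
      exact ⟨ξ', by omega, h2'⟩

end Trich


section Pins
variable {i : Pairt → Set ℕ} {f : Pairt → NWord → ℕ} {φ : ℕ → Pairt}

lemma word1_inj {a b : ℕ} (h : word1 a = word1 b) : a = b := by
  simpa [word1, Subtype.ext_iff] using h

lemma wordSnoc_inj {s s' : NWord} {k k' : ℕ} (h : wordSnoc s k = wordSnoc s' k') :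
    s = s' ∧ k = k' := by
  rw [Subtype.ext_iff] at h
  simp only [wordSnoc, ← List.concat_eq_append] at h
  rw [List.concat_inj] at h
  exact ⟨Subtype.ext h.1, h.2⟩

lemma word1_ne_snoc {a k : ℕ} {s : NWord} (h : word1 a = wordSnoc s k) : False := by
  rw [Subtype.ext_iff] at h
  simp only [word1, wordSnoc] at h
  have := congrArg List.length h
  simp only [List.length_singleton, List.length_append, List.length_singleton] at this
  have hs : s.1.length ≠ 0 := by
    simpa [List.length_eq_zero_iff] using s.2
  omega

lemma wordLE_word1 {v : NWord} {k : ℕ} (h : wordLE v (word1 k)) : v = word1 k := by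
  have h' : v.1 <+: [k] := h
  rw [List.prefix_cons_iff] at h'
  rcases h' with h' | ⟨t, ht, ht2⟩
  · exact absurd h' v.2
  · rw [List.prefix_nil] at ht2
    exact Subtype.ext (by rw [ht, ht2]; rfl)

lemma wordLE_snoc {v s : NWord} {k : ℕ} (h : wordLE v (wordSnoc s k)) :
    wordLE v s ∨ v = wordSnoc s k := by
  have h' : v.1 <+: s.1 ++ [k] := h
  rw [List.prefix_concat_iff] at h'
  rcases h' with h' | h'
  · exact Or.inr (Subtype.ext h')
  · exact Or.inl h'

/-- maximum of a list of naturals. -/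
def lmax (l : List ℕ) : ℕ := l.foldr max 0

lemma le_lmax_of_mem {a : ℕ} {l : List ℕ} (h : a ∈ l) : a ≤ lmax l := by
  induction l with
  | nil => cases h
  | cons b l ih =>
    rcases List.mem_cons.mp h with rfl | h
    · exact le_max_left _ _
    · exact le_trans (ih h) (le_max_right _ _)

lemma tag_eq (hif : IFData i f) {a : ℕ} {T T' : Pairt} (h1 : a ∈ i T) (h2 : a ∈ i T') :
    T = T' := by
  by_contra hne
  have := hif.disj T T' hne
  have : a ∈ i T ∩ i T' := ⟨h1, h2⟩
  rw [hif.disj T T' hne] at this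
  exact this

lemma ftag_eq (hif : IFData i f) {T T' : Pairt} {w w' : NWord}
    (h : f T w = f T' w') : T = T' ∧ w = w' := by
  have hT : T = T' := tag_eq hif (hif.mem T w) (h ▸ hif.mem T' w')
  subst hT
  exact ⟨rfl, hif.finj T h⟩

open Classical in
/-- pinned inverse of `f T`. -/
noncomputable def wOf (f : Pairt → NWord → ℕ) (T : Pairt) (e : ℕ) : NWord :=
  if h : ∃ w, f T w = e then h.choose else word1 0

open Classical in
lemma wOf_spec (hif : IFData i f) {T : Pairt} {w : NWord} {e : ℕ} (h : f T w = e) :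
    w = wOf f T e := by
  rw [wOf, dif_pos ⟨w, h⟩]
  exact hif.finj T (by rw [h, (⟨w, h⟩ : ∃ w, f T w = e).choose_spec])

open Classical in
/-- pinned index of a value in the partition `E`. -/
noncomputable def idxOf (i : Pairt → Set ℕ) (φ : ℕ → Pairt) (e : ℕ) : ℕ :=
  if h : ∃ m, e ∈ i (φ m) then h.choose else 0

open Classical in
lemma idxOf_spec (hif : IFData i f) (hφ : Function.Bijective φ) {e m : ℕ}
    (h : e ∈ i (φ m)) : m = idxOf i φ e := by
  rw [idxOf, dif_pos ⟨m, h⟩]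
  exact hφ.1 (tag_eq hif h (⟨m, h⟩ : ∃ m, e ∈ i (φ m)).choose_spec)

/-- inverse of the bijection `φ`. -/
noncomputable def pinv (φ : ℕ → Pairt) (T : Pairt) : ℕ := Function.invFun φ T

lemma pinv_spec (hφ : Function.Bijective φ) (T : Pairt) : φ (pinv φ T) = T :=
  Function.invFun_eq (hφ.2 T)

/-- combined word pin. -/
noncomputable def wpin (f : Pairt → NWord → ℕ) (T : Pairt) (e : ℕ) : ℕ :=
  (wOf f T e).1.length + lmax (wOf f T e).1

/-- the ways a non-top element of a fiber sits below a top element `(e,m,⊤)`. -/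
lemma some_below_none {c n e m : ℕ} {p : Pairt} {ξ : Mt}
    (h : NoneBelow f (c, n, some (p, ξ)) e m) :
    (e = c ∧ m = n) ∨
    (∃ w v, ξ = Sum.inr v ∧ c = p.1.1 ∧ m = n + 1 ∧ e = f p w ∧ wordLE v w) ∨
    (∃ k t, ξ = Sum.inl t ∧ c = p.1.2 ∧ m = n + 1 ∧ e = f p (word1 k) ∧ t ≤ k) ∨
    (∃ s k t, ξ = Sum.inl t ∧ c = f p s ∧ m = n ∧ e = f p (wordSnoc s k) ∧ t ≤ k) := by
  rcases h with heq | ⟨p', ξ', heq⟩ | ⟨p', w, v, n₃, hm, he, heq, hle⟩ |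
    ⟨p', k, t, n₃, hm, he, heq, hle⟩ | ⟨p', s, k, t, he, heq, hle⟩
  · simp only [Prod.mk.injEq] at heq
    exact absurd heq.2.2 (fun h => nomatch h)
  · simp only [Prod.mk.injEq, Option.some.injEq] at heq
    exact Or.inl ⟨heq.1.symm, heq.2.1.symm⟩
  · simp only [Prod.mk.injEq, Option.some.injEq] at heq
    have hc := heq.1
    have hn := heq.2.1
    have hp := heq.2.2.1.symm
    have hξ := heq.2.2.2.symm
    subst hp; subst hn
    exact Or.inr (Or.inl ⟨w, v, hξ ▸ rfl, hc, hm, he, hle⟩)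
  · simp only [Prod.mk.injEq, Option.some.injEq] at heq
    have hc := heq.1
    have hn := heq.2.1
    have hp := heq.2.2.1.symm
    have hξ := heq.2.2.2.symm
    subst hp; subst hn
    exact Or.inr (Or.inr (Or.inl ⟨k, t, hξ ▸ rfl, hc, hm, he, hle⟩))
  · simp only [Prod.mk.injEq, Option.some.injEq] at heq
    have hc := heq.1
    have hn := heq.2.1
    have hp := heq.2.2.1.symm
    have hξ := heq.2.2.2.symm
    subst hp; subst hn
    exact Or.inr (Or.inr (Or.inr ⟨s, k, t, hξ ▸ rfl, hc, rfl, he, hle⟩))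

end Pins


section Core
variable {i : Pairt → Set ℕ} {f : Pairt → NWord → ℕ} {φ : ℕ → Pairt}

/-- pin of an `M`-element. -/
def mpin : Mt → ℕ
  | Sum.inl t => t
  | Sum.inr v => v.1.length + lmax v.1

lemma length_le_wpin {T : Pairt} {e : ℕ} : (wOf f T e).1.length ≤ wpin f T e :=
  Nat.le_add_right _ _

lemma lmax_le_wpin {T : Pairt} {e : ℕ} : lmax (wOf f T e).1 ≤ wpin f T e :=
  Nat.le_add_left _ _

/-- Core lemma: if a fixed B-element `b` shares, together with elements of a fixed fiber of
unbounded measure, common upper bounds among top B-elements, then `b` lies below the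
top element of that fiber. -/
lemma fixed_vs_fiber (hif : IFData i f) {b : Bt} {c' n' : ℕ} {T' : Pairt}
    (H : ∀ N, ∃ ξ', N < msr ξ' ∧ ∃ e m,
        NoneBelow f b e m ∧ NoneBelow f (c', n', some (T', ξ')) e m) :
    NoneBelow f b c' n' := by
  obtain ⟨d, n₀, ℓ⟩ := b
  rcases ℓ with _ | ⟨T, ξ⟩
  · -- b is a top element `(d, n₀, ⊤)`
    obtain ⟨ξ', hms, e, m, h1, h2⟩ := H (wpin f T' d + 2)
    have hdm : e = d ∧ m = n₀ := by
      rcases h1 with heq | ⟨p, ξ₀, heq⟩ | ⟨p, w, v, n₃, hm, he, heq, hle⟩ |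
        ⟨p, k, t, n₃, hm, he, heq, hle⟩ | ⟨p, s, k, t, he, heq, hle⟩ <;>
        simp only [Prod.mk.injEq] at heq
      · exact ⟨heq.1.symm, heq.2.1.symm⟩
      all_goals exact absurd heq.2.2 (fun h => nomatch h)
    obtain ⟨rfl, rfl⟩ := hdm
    rcases some_below_none h2 with ⟨hec, hmn⟩ | ⟨w, v, hξ', hc', hm', he', hle'⟩ |
      ⟨k', t', hξ', hc', hm', he', hle'⟩ | ⟨s', k', t', hξ', hc', hm', he', hle'⟩
    · exact Or.inl (by rw [hec, hmn])
    · exfalso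
      have hw : w = wOf f T' e := wOf_spec hif he'.symm
      have hlen : msr ξ' ≤ wpin f T' e := by
        rw [hξ']
        have h6 := length_le_wpin (f := f) (T := T') (e := e)
        rw [← hw] at h6
        exact le_trans hle'.length_le h6
      omega
    · exfalso
      have hw : word1 k' = wOf f T' e := wOf_spec hif he'.symm
      have hk : k' ≤ lmax (wOf f T' e).1 := by
        refine le_lmax_of_mem ?_
        rw [← hw]
        exact List.mem_singleton.mpr rfl
      have : msr ξ' ≤ wpin f T' e := by
        rw [hξ']
        exact le_trans hle' (le_trans hk lmax_le_wpin)
      omega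
    · exfalso
      have hw : wordSnoc s' k' = wOf f T' e := wOf_spec hif he'.symm
      have hk : k' ≤ lmax (wOf f T' e).1 := by
        refine le_lmax_of_mem ?_
        rw [← hw]
        exact List.mem_append_right _ (List.mem_singleton.mpr rfl)
      have : msr ξ' ≤ wpin f T' e := by
        rw [hξ']
        exact le_trans hle' (le_trans hk lmax_le_wpin)
      omega
  · -- b is a fiber element `(d, n₀, (T, ξ))`
    obtain ⟨ξ', hms, e, m, h1, h2⟩ := H (wpin f T' d + wpin f T d + mpin ξ + 2)
    rcases some_below_none h1 with ⟨hed, hmn⟩ | ⟨w, v, hξ, hd, hm, he, hle⟩ |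
      ⟨k, t, hξ, hd, hm, he, hle⟩ | ⟨s, k, t, hξ, hd, hm, he, hle⟩
    · -- X1 : e = d, m = n₀
      rcases some_below_none h2 with ⟨hec, hmn'⟩ | ⟨w', v', hξ', hc', hm', he', hle'⟩ |
        ⟨k', t', hξ', hc', hm', he', hle'⟩ | ⟨s', k', t', hξ', hc', hm', he', hle'⟩
      · -- Y1 : good, same fiber
        exact Or.inr (Or.inl ⟨T, ξ, by rw [← hec, hed, ← hmn', hmn]⟩)
      · exfalso
        have hw : w' = wOf f T' d := wOf_spec hif (he'.symm.trans hed)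
        have : msr ξ' ≤ wpin f T' d := by
          rw [hξ']
          exact le_trans hle'.length_le (hw ▸ length_le_wpin)
        omega
      · exfalso
        have hw : word1 k' = wOf f T' d := wOf_spec hif (he'.symm.trans hed)
        have hk : k' ≤ lmax (wOf f T' d).1 := by
          refine le_lmax_of_mem ?_
          rw [← hw]
          exact List.mem_singleton.mpr rfl
        have : msr ξ' ≤ wpin f T' d := by
          rw [hξ']
          exact le_trans hle' (le_trans hk lmax_le_wpin)
        omega
      · exfalso
        have hw : wordSnoc s' k' = wOf f T' d := wOf_spec hif (he'.symm.trans hed)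
        have hk : k' ≤ lmax (wOf f T' d).1 := by
          refine le_lmax_of_mem ?_
          rw [← hw]
          exact List.mem_append_right _ (List.mem_singleton.mpr rfl)
        have : msr ξ' ≤ wpin f T' d := by
          rw [hξ']
          exact le_trans hle' (le_trans hk lmax_le_wpin)
        omega
    · -- X2 : ξ = inr v, d = T.1.1, m = n₀+1, e = f T w, v ≼ w
      rcases some_below_none h2 with ⟨hec, hmn'⟩ | ⟨w', v', hξ', hc', hm', he', hle'⟩ |
        ⟨k', t', hξ', hc', hm', he', hle'⟩ | ⟨s', k', t', hξ', hc', hm', he', hle'⟩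
      · -- Y1 : e = c', m = n' : good, clause 3
        refine Or.inr (Or.inr (Or.inl ⟨T, w, v, n₀, by omega, by rw [← hec, he], ?_, hle⟩))
        rw [hd, hξ]
      · -- Y2 : tags agree
        obtain ⟨hTT, hww⟩ := ftag_eq hif (he.symm.trans he')
        subst hTT
        have hnn : n₀ = n' := by omega
        exact Or.inr (Or.inl ⟨T, ξ, by rw [hd, hc', hξ, hnn]⟩)
      · -- Y3 : kill via lmax v
        exfalso
        obtain ⟨hTT, hww⟩ := ftag_eq hif (he.symm.trans he')
        have hv : v = word1 k' := wordLE_word1 (hww ▸ hle)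
        have hk : k' ≤ lmax v.1 := by
          refine le_lmax_of_mem ?_
          rw [hv]
          exact List.mem_singleton.mpr rfl
        have h5 : msr ξ' ≤ mpin ξ := by
          rw [hξ', hξ]
          exact le_trans hle' (le_trans hk (le_trans (Nat.le_add_left _ _) (le_refl _)))
        omega
      · -- Y4 : split
        obtain ⟨hTT, hww⟩ := ftag_eq hif (he.symm.trans he')
        rcases wordLE_snoc (hww ▸ hle) with hvs | hvs
        · -- good: clause 3 with word s'
          refine Or.inr (Or.inr (Or.inl ⟨T, s', v, n₀, by omega,
            by rw [hc', hTT], ?_, hvs⟩))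
          rw [hd, hξ]
        · -- kill: k' is a letter of v
          exfalso
          have hk : k' ≤ lmax v.1 := by
            refine le_lmax_of_mem ?_
            rw [hvs]
            exact List.mem_append_right _ (List.mem_singleton.mpr rfl)
          have h5 : msr ξ' ≤ mpin ξ := by
            rw [hξ', hξ]
            exact le_trans hle' (le_trans hk (Nat.le_add_left _ _))
          omega
    · -- X3 : ξ = inl t, d = T.1.2, m = n₀+1, e = f T (word1 k), t ≤ k
      rcases some_below_none h2 with ⟨hec, hmn'⟩ | ⟨w', v', hξ', hc', hm', he', hle'⟩ |
        ⟨k', t', hξ', hc', hm', he', hle'⟩ | ⟨s', k', t', hξ', hc', hm', he', hle'⟩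
      · -- Y1 : good, clause 4
        refine Or.inr (Or.inr (Or.inr (Or.inl ⟨T, k, t, n₀, by omega,
          by rw [← hec, he], ?_, hle⟩)))
        rw [hd, hξ]
      · -- Y2 : kill, |v'| = 1
        exfalso
        obtain ⟨hTT, hww⟩ := ftag_eq hif (he.symm.trans he')
        have hv : v' = word1 k := wordLE_word1 (hww ▸ hle')
        have h5 : msr ξ' ≤ 1 := by
          rw [hξ', hv]
          exact le_refl 1
        omega
      · -- Y3 : good, same fiber
        obtain ⟨hTT, hww⟩ := ftag_eq hif (he.symm.trans he')
        subst hTT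
        have hnn : n₀ = n' := by omega
        exact Or.inr (Or.inl ⟨T, ξ, by rw [hd, hc', hξ, hnn]⟩)
      · -- Y4 : impossible
        exfalso
        obtain ⟨hTT, hww⟩ := ftag_eq hif (he.symm.trans he')
        exact word1_ne_snoc hww
    · -- X4 : ξ = inl t, d = f T s, m = n₀, e = f T (s.k), t ≤ k
      rcases some_below_none h2 with ⟨hec, hmn'⟩ | ⟨w', v', hξ', hc', hm', he', hle'⟩ |
        ⟨k', t', hξ', hc', hm', he', hle'⟩ | ⟨s', k', t', hξ', hc', hm', he', hle'⟩
      · -- Y1 : good, clause 5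
        have hnn : n₀ = n' := by omega
        refine Or.inr (Or.inr (Or.inr (Or.inr ⟨T, s, k, t, by rw [← hec, he], ?_, hle⟩)))
        rw [hd, hξ, hnn]
      · -- Y2 : kill via wpin f T d
        exfalso
        obtain ⟨hTT, hww⟩ := ftag_eq hif (he.symm.trans he')
        have hs : s = wOf f T d := wOf_spec hif hd.symm
        have hlv : v'.1.length ≤ s.1.length + 1 := by
          have h6 := hle'.length_le
          rw [← hww] at h6
          simpa [wordSnoc] using h6
        have hlen : s.1.length ≤ wpin f T d := by
          rw [hs]; exact length_le_wpin
        have h5 : msr ξ' ≤ wpin f T d + 1 := by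
          rw [hξ']
          simp only [msr]
          omega
        omega
      · -- Y3 : impossible
        exfalso
        obtain ⟨hTT, hww⟩ := ftag_eq hif (he.symm.trans he')
        exact word1_ne_snoc hww.symm
      · -- Y4 : good, same fiber
        obtain ⟨hTT, hww⟩ := ftag_eq hif (he.symm.trans he')
        obtain ⟨hss, hkk⟩ := wordSnoc_inj hww
        subst hTT
        have hnn : n₀ = n' := by omega
        refine Or.inr (Or.inl ⟨T, ξ, ?_⟩)
        rw [hd, hc', hss, hξ, hnn]
end Core


section Core2
variable {i : Pairt → Set ℕ} {f : Pairt → NWord → ℕ} {φ : ℕ → Pairt}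

lemma none_below_none {d n₀ e m : ℕ} (h : NoneBelow f (d, n₀, (none : Lt)) e m) :
    e = d ∧ m = n₀ := by
  rcases h with heq | ⟨p, ξ₀, heq⟩ | ⟨p, w, v, n₃, hm, he, heq, hle⟩ |
    ⟨p, k, t, n₃, hm, he, heq, hle⟩ | ⟨p, s, k, t, he, heq, hle⟩ <;>
    simp only [Prod.mk.injEq] at heq
  · exact ⟨heq.1.symm, heq.2.1.symm⟩
  all_goals exact absurd heq.2.2 (fun h => nomatch h)

lemma noneBelow_level {c' n' e m : ℕ} {T' : Pairt} {ξ' : Mt}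
    (h : NoneBelow f (c', n', some (T', ξ')) e m) : m ≤ n' + 1 := by
  rcases some_below_none h with ⟨-, hm⟩ | ⟨w, v, -, -, hm, -, -⟩ |
    ⟨k, t, -, -, hm, -, -⟩ | ⟨s, k, t, -, -, hm, -, -⟩ <;> omega

lemma fiber_le₁ {c n : ℕ} {T : Pairt} {ξ ξ₃ : Mt} (hm : Mle ξ ξ₃) :
    P1le f (P1ofB (c, n, some (T, ξ))) (P1ofB (c, n, some (T, ξ₃))) := by
  by_cases heq : ξ = ξ₃
  · exact Or.inl (by rw [heq])
  · exact Or.inr (Or.inr (Or.inl ⟨_, _, rfl, rfl, Or.inl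
      ⟨c, n, some (T, ξ), some (T, ξ₃), rfl, rfl,
        Or.inr ⟨T, ξ, ξ₃, rfl, rfl, hm, heq⟩⟩⟩))

lemma fiber_le₂ {c n : ℕ} {T : Pairt} {ξ ξ₃ : Mt} (hm : Mle ξ ξ₃) :
    P2le i φ f (P2ofB i φ (c, n, some (T, ξ))) (P2ofB i φ (c, n, some (T, ξ₃))) := by
  by_cases heq : ξ = ξ₃
  · exact Or.inl (by rw [heq])
  · exact Or.inr (Or.inr (Or.inl ⟨_, _, rfl, rfl, Or.inl
      ⟨c, n, some (T, ξ), some (T, ξ₃), rfl, rfl,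
        Or.inr ⟨T, ξ, ξ₃, rfl, rfl, hm, heq⟩⟩⟩))

/-- A fiber of unbounded measure below a fixed top element must be the fiber of that top. -/
lemma fiber_below_none (hif : IFData i f) {c n c' n' : ℕ} {T : Pairt}
    (H : ∀ N, ∃ ξ, N < msr ξ ∧ NoneBelow f (c, n, some (T, ξ)) c' n') :
    c' = c ∧ n' = n := by
  obtain ⟨ξ, hms, h⟩ := H (wpin f T c' + 1)
  rcases some_below_none h with h0 | ⟨w, v, hξ, hc, hm, he, hle⟩ |
    ⟨k, t, hξ, hc, hm, he, hle⟩ | ⟨s, k, t, hξ, hc, hm, he, hle⟩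
  · exact h0
  · exfalso
    have hw : w = wOf f T c' := wOf_spec hif he.symm
    have : msr ξ ≤ wpin f T c' := by
      rw [hξ]
      have h6 := length_le_wpin (f := f) (T := T) (e := c')
      rw [← hw] at h6
      exact le_trans hle.length_le h6
    omega
  · exfalso
    have hw : word1 k = wOf f T c' := wOf_spec hif he.symm
    have hk : k ≤ lmax (wOf f T c').1 := by
      refine le_lmax_of_mem ?_
      rw [← hw]
      exact List.mem_singleton.mpr rfl
    have : msr ξ ≤ wpin f T c' := by
      rw [hξ]
      exact le_trans hle (le_trans hk lmax_le_wpin)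
    omega
  · exfalso
    have hw : wordSnoc s k = wOf f T c' := wOf_spec hif he.symm
    have hk : k ≤ lmax (wOf f T c').1 := by
      refine le_lmax_of_mem ?_
      rw [← hw]
      exact List.mem_append_right _ (List.mem_singleton.mpr rfl)
    have : msr ξ ≤ wpin f T c' := by
      rw [hξ]
      exact le_trans hle (le_trans hk lmax_le_wpin)
    omega

/-- `ℕ^ℕ`-element against a fiber of unbounded measure. -/
lemma K1_vs_fiber (hif : IFData i f) {g : ℕ → ℕ} {j c' n' : ℕ} {T' : Pairt}
    (H : ∀ N, ∃ ξ', N < msr ξ' ∧ ∃ e m, (j ≤ m ∧ g m = e) ∧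
        NoneBelow f (c', n', some (T', ξ')) e m) :
    j ≤ n' ∧ g n' = c' := by
  obtain ⟨ξ', hms, e, m, ⟨hjm, hge⟩, h2⟩ :=
    H (wpin f T' (g n') + wpin f T' (g (n' + 1)) + 2)
  rcases some_below_none h2 with ⟨hec, hmn⟩ | ⟨w', v', hξ', hc', hm', he', hle'⟩ |
    ⟨k', t', hξ', hc', hm', he', hle'⟩ | ⟨s', k', t', hξ', hc', hm', he', hle'⟩
  · exact ⟨by omega, by rw [← hmn, hge, hec]⟩
  · exfalso
    have hgv : f T' w' = g (n' + 1) := by rw [← hm', hge, ← he']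
    have hw : w' = wOf f T' (g (n' + 1)) := wOf_spec hif hgv
    have : msr ξ' ≤ wpin f T' (g (n' + 1)) := by
      rw [hξ']
      have h6 := length_le_wpin (f := f) (T := T') (e := g (n' + 1))
      rw [← hw] at h6
      exact le_trans hle'.length_le h6
    omega
  · exfalso
    have hgv : f T' (word1 k') = g (n' + 1) := by rw [← hm', hge, ← he']
    have hw : word1 k' = wOf f T' (g (n' + 1)) := wOf_spec hif hgv
    have hk : k' ≤ lmax (wOf f T' (g (n' + 1))).1 := by
      refine le_lmax_of_mem ?_
      rw [← hw]
      exact List.mem_singleton.mpr rfl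
    have : msr ξ' ≤ wpin f T' (g (n' + 1)) := by
      rw [hξ']
      exact le_trans hle' (le_trans hk lmax_le_wpin)
    omega
  · exfalso
    have hgv : f T' (wordSnoc s' k') = g n' := by rw [← hm', hge, ← he']
    have hw : wordSnoc s' k' = wOf f T' (g n') := wOf_spec hif hgv
    have hk : k' ≤ lmax (wOf f T' (g n')).1 := by
      refine le_lmax_of_mem ?_
      rw [← hw]
      exact List.mem_append_right _ (List.mem_singleton.mpr rfl)
    have : msr ξ' ≤ wpin f T' (g n') := by
      rw [hξ']
      exact le_trans hle' (le_trans hk lmax_le_wpin)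
    omega

/-- `X × ℕ × ℕ`-element against a fiber of unbounded measure. -/
lemma K2_vs_fiber (hif : IFData i f) (hφ : Function.Bijective φ) {hh : Xt i φ}
    {m₀ k c n : ℕ} {T : Pairt}
    (H : ∀ N, ∃ ξ, N < msr ξ ∧ ∃ e m, NoneBelow f (c, n, some (T, ξ)) e m ∧
        (k = m ∧ ∃ m', m₀ ≤ m' ∧ hh.1 m' = e)) :
    k = n ∧ ∃ m', m₀ ≤ m' ∧ hh.1 m' = c := by
  have key : ∀ e m', hh.1 m' = e → e ∈ i T → m' = pinv φ T := by
    intro e m' hm' hei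
    refine hφ.1 ?_
    rw [pinv_spec hφ]
    exact tag_eq hif (hm' ▸ hh.2 m') hei
  obtain ⟨ξ, hms, e, m, h1, ⟨hkm, m', hm₀, hm'e⟩⟩ :=
    H (wpin f T (hh.1 (pinv φ T)) + 1)
  rcases some_below_none h1 with ⟨hec, hmn⟩ | ⟨w, v, hξ, hc, hm, he, hle⟩ |
    ⟨k', t, hξ, hc, hm, he, hle⟩ | ⟨s, k', t, hξ, hc, hm, he, hle⟩
  · exact ⟨by omega, m', hm₀, by rw [hm'e, hec]⟩
  · exfalso
    have hpin : m' = pinv φ T := key e m' hm'e (he ▸ hif.mem T w)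
    have heval : f T w = hh.1 (pinv φ T) := by rw [← hpin, hm'e, he]
    have hw : w = wOf f T (hh.1 (pinv φ T)) := wOf_spec hif heval
    have : msr ξ ≤ wpin f T (hh.1 (pinv φ T)) := by
      rw [hξ]
      have h6 := length_le_wpin (f := f) (T := T) (e := hh.1 (pinv φ T))
      rw [← hw] at h6
      exact le_trans hle.length_le h6
    omega
  · exfalso
    have hpin : m' = pinv φ T := key e m' hm'e (he ▸ hif.mem T (word1 k'))
    have heval : f T (word1 k') = hh.1 (pinv φ T) := by rw [← hpin, hm'e, he]
    have hw : word1 k' = wOf f T (hh.1 (pinv φ T)) := wOf_spec hif heval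
    have hk : k' ≤ lmax (wOf f T (hh.1 (pinv φ T))).1 := by
      refine le_lmax_of_mem ?_
      rw [← hw]
      exact List.mem_singleton.mpr rfl
    have : msr ξ ≤ wpin f T (hh.1 (pinv φ T)) := by
      rw [hξ]
      exact le_trans hle (le_trans hk lmax_le_wpin)
    omega
  · exfalso
    have hpin : m' = pinv φ T := key e m' hm'e (he ▸ hif.mem T (wordSnoc s k'))
    have heval : f T (wordSnoc s k') = hh.1 (pinv φ T) := by rw [← hpin, hm'e, he]
    have hw : wordSnoc s k' = wOf f T (hh.1 (pinv φ T)) := wOf_spec hif heval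
    have hk : k' ≤ lmax (wOf f T (hh.1 (pinv φ T))).1 := by
      refine le_lmax_of_mem ?_
      rw [← hw]
      exact List.mem_append_right _ (List.mem_singleton.mpr rfl)
    have : msr ξ ≤ wpin f T (hh.1 (pinv φ T)) := by
      rw [hξ]
      exact le_trans hle (le_trans hk lmax_le_wpin)
    omega

/-- bound on `X`-chains paired with elements of a fixed fiber. -/
lemma K2_bound_fiber (hif : IFData i f) (hφ : Function.Bijective φ) {c n : ℕ} {T : Pairt}
    {hh : Xt i φ} {m₀ e m : ℕ} {ξ : Mt} (h1 : NoneBelow f (c, n, some (T, ξ)) e m)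
    (h2 : ∃ m', m₀ ≤ m' ∧ hh.1 m' = e) :
    m₀ ≤ max (idxOf i φ c) (pinv φ T) := by
  obtain ⟨m', hm₀, hm'e⟩ := h2
  have key : e ∈ i T → m' = pinv φ T := by
    intro hei
    refine hφ.1 ?_
    rw [pinv_spec hφ]
    exact tag_eq hif (hm'e ▸ hh.2 m') hei
  rcases some_below_none h1 with ⟨hec, -⟩ | ⟨w, v, -, -, -, he, -⟩ |
    ⟨k', t, -, -, -, he, -⟩ | ⟨s, k', t, -, -, -, he, -⟩
  · have : m' = idxOf i φ c := idxOf_spec hif hφ (by rw [← hec, ← hm'e]; exact hh.2 m')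
    omega
  · have := key (he ▸ hif.mem T w)
    omega
  · have := key (he ▸ hif.mem T (word1 k'))
    omega
  · have := key (he ▸ hif.mem T (wordSnoc s k'))
    omega

/-- bound on `X`-chains paired with a fixed element of `P₁` at a fixed level. -/
lemma K2_bound_fixed (hif : IFData i f) (hφ : Function.Bijective φ) (x : P1t)
    (hh : Xt i φ) (k : ℕ) :
    ∃ M, ∀ m₀ e, P1le f x (P1ofB (e, k, (none : Lt))) →
      (∃ m', m₀ ≤ m' ∧ hh.1 m' = e) → m₀ ≤ M := by
  rcases x with ⟨g, j⟩ | b | u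
  · refine ⟨idxOf i φ (g k), ?_⟩
    intro m₀ e hle h2
    obtain ⟨m', hm₀, hm'e⟩ := h2
    rcases p1le_none_iff.mp hle with ⟨b', habs, -⟩ | ⟨g', n₁, heq, -, hgke⟩
    · exact absurd habs inl_ne_p1ofB
    · simp only [Sum.inl.injEq, Prod.mk.injEq] at heq
      obtain ⟨rfl, rfl⟩ := heq
      have : m' = idxOf i φ (g k) := idxOf_spec hif hφ
        (by rw [hgke, ← hm'e]; exact hh.2 m')
      omega
  · obtain ⟨d, n₀, ℓ⟩ := b
    rcases ℓ with _ | ⟨T, ξ⟩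
    · refine ⟨idxOf i φ d, ?_⟩
      intro m₀ e hle h2
      obtain ⟨m', hm₀, hm'e⟩ := h2
      rcases p1le_none_iff.mp hle with ⟨b', hb', hnb⟩ | ⟨g, n₁, habs, -⟩
      · have hb'' : b' = (d, n₀, (none : Lt)) := by
          have := hb'.symm
          rw [show Sum.inr (Sum.inl (d, n₀, (none : Lt))) = P1ofB (d, n₀, (none : Lt))
            from rfl] at this
          exact (p1ofB_inj.mp this.symm).symm
        rw [hb''] at hnb
        obtain ⟨rfl, -⟩ := none_below_none hnb
        have : m' = idxOf i φ e := idxOf_spec hif hφ (by rw [← hm'e]; exact hh.2 m')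
        omega
      · exact absurd habs p1ofB_ne_inl
    · refine ⟨max (idxOf i φ d) (pinv φ T), ?_⟩
      intro m₀ e hle h2
      rcases p1le_none_iff.mp hle with ⟨b', hb', hnb⟩ | ⟨g, n₁, habs, -⟩
      · have hb'' : b' = (d, n₀, some (T, ξ)) := by
          have := hb'
          rw [show Sum.inr (Sum.inl (d, n₀, some (T, ξ))) = P1ofB (d, n₀, some (T, ξ))
            from rfl] at this
          exact (p1ofB_inj.mp this).symm
        rw [hb''] at hnb
        exact K2_bound_fiber hif hφ hnb h2
      · exact absurd habs p1ofB_ne_inl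
  · refine ⟨0, ?_⟩
    intro m₀ e hle h2
    cases u
    exact absurd (p1top_le hle) p1ofB_ne_top

end Core2


section Bounds
variable {i : Pairt → Set ℕ} {f : Pairt → NWord → ℕ} {φ : ℕ → Pairt}

lemma top_not_le_none₁ {b : Bt} (h : P1le f P1top (P1ofB b)) : False :=
  absurd (p1top_le h) p1ofB_ne_top

lemma top_not_le_none₂ {b : Bt} (h : P2le i φ f (P2top i φ) (P2ofB i φ b)) : False :=
  absurd (p2top_le h) p2ofB_ne_top

/-- level bound for elements of `P₂`. -/
lemma lev_bound₂ (y : P2t i φ) :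
    ∃ M, ∀ e m, P2le i φ f y (P2ofB i φ (e, m, (none : Lt))) → m ≤ M := by
  rcases y with ⟨hh, n, k⟩ | b | u
  · refine ⟨k, fun e m h => ?_⟩
    rcases p2le_none_iff.mp h with ⟨b', habs, -⟩ | ⟨h', n', k', heq, hkm, -⟩
    · exact absurd habs inl_ne_p2ofB
    · simp only [Sum.inl.injEq, Prod.mk.injEq] at heq
      omega
  · obtain ⟨d, n₀, ℓ⟩ := b
    refine ⟨n₀ + 1, fun e m h => ?_⟩
    rcases p2le_none_iff.mp h with ⟨b', hb', hnb⟩ | ⟨h', n', k', habs, -⟩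
    · have hb'' : b' = (d, n₀, ℓ) := by
        have := hb'
        rw [show (Sum.inr (Sum.inl (d, n₀, ℓ)) : P2t i φ) = P2ofB i φ (d, n₀, ℓ)
          from rfl] at this
        exact (p2ofB_inj.mp this).symm
      rw [hb''] at hnb
      rcases ℓ with _ | ⟨T, ξ⟩
      · obtain ⟨-, rfl⟩ := none_below_none hnb
        omega
      · exact noneBelow_level hnb
    · exact absurd habs (by
        rw [show (Sum.inr (Sum.inl (d, n₀, ℓ)) : P2t i φ) = P2ofB i φ (d, n₀, ℓ) from rfl]
        exact p2ofB_ne_inl)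
  · cases u
    exact ⟨0, fun e m h => absurd h (fun h' => top_not_le_none₂ h')⟩

/-- extraction of a common witness for a pair in `CC`. -/
lemma CC_witness {z : P1t × P2t i φ} (hz : z ∈ CC i φ f) :
    ∃ e m, P1le f z.1 (P1ofB (e, m, (none : Lt))) ∧
      P2le i φ f z.2 (P2ofB i φ (e, m, (none : Lt))) := hz

lemma CC_fst_ne_top {z : P1t × P2t i φ} (hz : z ∈ CC i φ f) : z.1 ≠ P1top := by
  obtain ⟨e, m, h1, -⟩ := hz
  intro heq
  rw [heq] at h1
  exact top_not_le_none₁ h1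

lemma CC_snd_ne_top {z : P1t × P2t i φ} (hz : z ∈ CC i φ f) : z.2 ≠ P2top i φ := by
  obtain ⟨e, m, -, h2⟩ := hz
  intro heq
  rw [heq] at h2
  exact top_not_le_none₂ h2

/-- extract a `NoneBelow` witness from `P1le` into a top element, for a `B`-element. -/
lemma noneBelow_of_p1le {b : Bt} {e m : ℕ} (h : P1le f (P1ofB b) (P1ofB (e, m, (none : Lt)))) :
    NoneBelow f b e m := by
  rcases p1le_none_iff.mp h with ⟨b', hb', hnb⟩ | ⟨g, n₁, habs, -⟩
  · rw [p1ofB_inj] at hb'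
    exact hb' ▸ hnb
  · exact absurd habs p1ofB_ne_inl

lemma noneBelow_of_p2le {b : Bt} {e m : ℕ}
    (h : P2le i φ f (P2ofB i φ b) (P2ofB i φ (e, m, (none : Lt)))) :
    NoneBelow f b e m := by
  rcases p2le_none_iff.mp h with ⟨b', hb', hnb⟩ | ⟨hh, n₁, k₁, habs, -⟩
  · rw [p2ofB_inj] at hb'
    exact hb' ▸ hnb
  · exact absurd habs p2ofB_ne_inl

lemma p1le_of_noneBelow {b : Bt} {e m : ℕ} (h : NoneBelow f b e m) :
    P1le f (P1ofB b) (P1ofB (e, m, (none : Lt))) :=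
  p1le_none_iff.mpr (Or.inl ⟨b, rfl, h⟩)

lemma p2le_of_noneBelow {b : Bt} {e m : ℕ} (h : NoneBelow f b e m) :
    P2le i φ f (P2ofB i φ b) (P2ofB i φ (e, m, (none : Lt))) :=
  p2le_none_iff.mpr (Or.inl ⟨b, rfl, h⟩)

end Bounds


section Bounds2
variable {i : Pairt → Set ℕ} {f : Pairt → NWord → ℕ} {φ : ℕ → Pairt}

lemma le_inl_le₁ {g g' : ℕ → ℕ} {n₁ n₃ : ℕ}
    (h : P1le f (Sum.inl (g, n₁)) (Sum.inl (g', n₃))) : n₁ ≤ n₃ := by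
  rcases le_inl₁ h with heq | ⟨j', hj', heq⟩ <;>
    simp only [Sum.inl.injEq, Prod.mk.injEq] at heq <;> omega

lemma le_inl_le₂ {hh hh' : Xt i φ} {n₁ n₃ k k' : ℕ}
    (h : P2le i φ f (Sum.inl (hh, n₁, k)) (Sum.inl (hh', n₃, k'))) : n₁ ≤ n₃ := by
  rcases le_inl₂ h with heq | ⟨j', hj', heq⟩ <;>
    simp only [Sum.inl.injEq, Prod.mk.injEq] at heq <;> omega

lemma mle_of_fiber_le₁ {c n : ℕ} {T : Pairt} {ξ ξ₃ : Mt}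
    (h : P1le f (P1ofB (c, n, some (T, ξ))) (P1ofB (c, n, some (T, ξ₃)))) : Mle ξ ξ₃ := by
  rcases le_some₁ h with heq | ⟨ξ'', heq, hm⟩ <;>
    rw [p1ofB_inj] at heq <;>
    simp only [Prod.mk.injEq, Option.some.injEq] at heq
  · rw [heq.2.2.2]; exact Mle_refl _
  · rw [heq.2.2.2]; exact hm.1

lemma mle_of_fiber_le₂ {c n : ℕ} {T : Pairt} {ξ ξ₃ : Mt}
    (h : P2le i φ f (P2ofB i φ (c, n, some (T, ξ))) (P2ofB i φ (c, n, some (T, ξ₃)))) :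
    Mle ξ ξ₃ := by
  rcases le_some₂ h with heq | ⟨ξ'', heq, hm⟩ <;>
    rw [p2ofB_inj] at heq <;>
    simp only [Prod.mk.injEq, Option.some.injEq] at heq
  · rw [heq.2.2.2]; exact Mle_refl _
  · rw [heq.2.2.2]; exact hm.1

end Bounds2


section Closed
variable {i : Pairt → Set ℕ} {f : Pairt → NWord → ℕ} {φ : ℕ → Pairt}

lemma CC_closed (hif : IFData i f) (hφ : Function.Bijective φ) :
    ScottClosed' (prodLe i φ f) (CC i φ f) := by
  constructor
  · exact fun x y hxy hy => CC_lower hxy hy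
  · intro D u hD hdir hlub
    obtain ⟨hne, hdd⟩ := hdir
    suffices h : ∃ ub ∈ CC i φ f, ∀ d ∈ D, prodLe i φ f d ub by
      obtain ⟨ub, hub, hubd⟩ := h
      exact CC_lower (hlub.2 ub hubd) hub
    have hdir₁ : ∀ x ∈ Prod.fst '' D, ∀ y ∈ Prod.fst '' D,
        ∃ z ∈ Prod.fst '' D, P1le f x z ∧ P1le f y z := by
      rintro x ⟨dx, hdx, rfl⟩ y ⟨dy, hdy, rfl⟩
      obtain ⟨z, hz, h1, h2⟩ := hdd dx hdx dy hdy
      exact ⟨z.1, ⟨z, hz, rfl⟩, h1.1, h2.1⟩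
    have hdir₂ : ∀ x ∈ Prod.snd '' D, ∀ y ∈ Prod.snd '' D,
        ∃ z ∈ Prod.snd '' D, P2le i φ f x z ∧ P2le i φ f y z := by
      rintro x ⟨dx, hdx, rfl⟩ y ⟨dy, hdy, rfl⟩
      obtain ⟨z, hz, h1, h2⟩ := hdd dx hdx dy hdy
      exact ⟨z.2, ⟨z, hz, rfl⟩, h1.2, h2.2⟩
    have htop₁ : P1top ∉ Prod.fst '' D := by
      rintro ⟨d, hd, heq⟩
      exact CC_fst_ne_top (hD hd) heq
    have htop₂ : P2top i φ ∉ Prod.snd '' D := by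
      rintro ⟨d, hd, heq⟩
      exact CC_snd_ne_top (hD hd) heq
    by_cases hgr₁ : ∃ z ∈ Prod.fst '' D, ∀ s ∈ Prod.fst '' D, P1le f s z
    · obtain ⟨x₁, hx₁mem, hx₁gr⟩ := hgr₁
      obtain ⟨dx, hdx, hdxeq⟩ := hx₁mem
      by_cases hgr₂ : ∃ z ∈ Prod.snd '' D, ∀ s ∈ Prod.snd '' D, P2le i φ f s z
      · -- (greatest, greatest)
        obtain ⟨y₁, hy₁mem, hy₁gr⟩ := hgr₂
        obtain ⟨dy, hdy, hdyeq⟩ := hy₁mem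
        obtain ⟨d₃, hd₃, h13, h23⟩ := hdd dx hdx dy hdy
        have e₁ : d₃.1 = x₁ := p1le_antisymm (hx₁gr d₃.1 ⟨d₃, hd₃, rfl⟩)
          (hdxeq ▸ h13.1)
        have e₂ : d₃.2 = y₁ := p2le_antisymm (hy₁gr d₃.2 ⟨d₃, hd₃, rfl⟩)
          (hdyeq ▸ h23.2)
        refine ⟨d₃, hD hd₃, fun d hd => ⟨?_, ?_⟩⟩
        · rw [e₁]; exact hx₁gr d.1 ⟨d, hd, rfl⟩
        · rw [e₂]; exact hy₁gr d.2 ⟨d, hd, rfl⟩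
      · push_neg at hgr₂
        rcases trichotomy₂ (hne.image _) hdir₂ htop₂ hgr₂ with
          ⟨hh, k, hall, hunb⟩ | ⟨c', n', T', hfib, hunb⟩
        · -- (greatest, K₂-chain) : impossible
          exfalso
          obtain ⟨M, hM⟩ := K2_bound_fixed hif hφ x₁ hh k
          obtain ⟨m₁, hm₁, hmem₁⟩ := hunb (M + 1)
          obtain ⟨d', hd', hd'eq⟩ := hmem₁
          obtain ⟨d₃, hd₃, h13, h23⟩ := hdd dx hdx d' hd'
          have e₁ : d₃.1 = x₁ := p1le_antisymm (hx₁gr d₃.1 ⟨d₃, hd₃, rfl⟩)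
            (hdxeq ▸ h13.1)
          obtain ⟨m₃, hm₃eq⟩ := hall d₃.2 ⟨d₃, hd₃, rfl⟩
          have hm₁₃ : m₁ ≤ m₃ := by
            have h' := h23.2
            rw [hd'eq, hm₃eq] at h'
            exact le_inl_le₂ h'
          obtain ⟨e, m, h1, h2⟩ := hD hd₃
          rw [hm₃eq] at h2
          rcases p2le_none_iff.mp h2 with ⟨b', habs, -⟩ | ⟨hh', n₂, k₂, heq, hkm, hex⟩
          · exact absurd habs inl_ne_p2ofB
          · simp only [Sum.inl.injEq, Prod.mk.injEq] at heq
            obtain ⟨rfl, rfl, rfl⟩ := heq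
            rw [e₁] at h1
            rw [← hkm] at h1
            have := hM m₃ e h1 hex
            omega
        · -- (greatest, fiber) : LEMMA A
          have HH : ∀ N, ∃ ξ', N < msr ξ' ∧ ∃ e m,
              P1le f x₁ (P1ofB (e, m, (none : Lt))) ∧
              NoneBelow f (c', n', some (T', ξ')) e m := by
            intro N
            obtain ⟨ξ₁, hN₁, hmem₁⟩ := hunb N
            obtain ⟨d', hd', hd'eq⟩ := hmem₁
            obtain ⟨d₃, hd₃, h13, h23⟩ := hdd dx hdx d' hd'
            have e₁ : d₃.1 = x₁ := p1le_antisymm (hx₁gr d₃.1 ⟨d₃, hd₃, rfl⟩)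
              (hdxeq ▸ h13.1)
            obtain ⟨ξ₃, h₃eq⟩ := hfib d₃.2 ⟨d₃, hd₃, rfl⟩
            have hmle : Mle ξ₁ ξ₃ := by
              have h' := h23.2
              rw [hd'eq, h₃eq] at h'
              exact mle_of_fiber_le₂ h'
            obtain ⟨e, m, h1, h2⟩ := hD hd₃
            rw [h₃eq] at h2
            rw [e₁] at h1
            exact ⟨ξ₃, lt_of_lt_of_le hN₁ (msr_mono hmle), e, m, h1,
              noneBelow_of_p2le h2⟩
          have hxle : P1le f x₁ (P1ofB (c', n', (none : Lt))) := by
            rcases hx : x₁ with ⟨g, j⟩ | b | uu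
            · have HK : ∀ N, ∃ ξ', N < msr ξ' ∧ ∃ e m, (j ≤ m ∧ g m = e) ∧
                  NoneBelow f (c', n', some (T', ξ')) e m := by
                intro N
                obtain ⟨ξ', hN, e, m, h1, h2⟩ := HH N
                rw [hx] at h1
                rcases p1le_none_iff.mp h1 with ⟨b', habs, -⟩ | ⟨g₂, n₂, heq, hjm, hge⟩
                · exact absurd habs inl_ne_p1ofB
                · simp only [Sum.inl.injEq, Prod.mk.injEq] at heq
                  obtain ⟨rfl, rfl⟩ := heq
                  exact ⟨ξ', hN, e, m, ⟨hjm, hge⟩, h2⟩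
              obtain ⟨hj, hg⟩ := K1_vs_fiber hif HK
              exact p1le_none_iff.mpr (Or.inr ⟨g, j, rfl, hj, hg⟩)
            · have HB : ∀ N, ∃ ξ', N < msr ξ' ∧ ∃ e m, NoneBelow f b e m ∧
                  NoneBelow f (c', n', some (T', ξ')) e m := by
                intro N
                obtain ⟨ξ', hN, e, m, h1, h2⟩ := HH N
                rw [hx] at h1
                exact ⟨ξ', hN, e, m, noneBelow_of_p1le h1, h2⟩
              exact p1le_of_noneBelow (fixed_vs_fiber hif HB)
            · exact absurd (show P1top ∈ Prod.fst '' D from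
                ⟨dx, hdx, by rw [hdxeq, hx]; cases uu; rfl⟩) htop₁
          refine ⟨(x₁, P2ofB i φ (c', n', (none : Lt))), ⟨c', n', hxle, p2le_refl _⟩,
            fun d hd => ⟨hx₁gr d.1 ⟨d, hd, rfl⟩, ?_⟩⟩
          obtain ⟨ξd, hdeq⟩ := hfib d.2 ⟨d, hd, rfl⟩
          rw [hdeq]
          exact p2le_of_noneBelow (Or.inr (Or.inl ⟨T', ξd, rfl⟩))
    · push_neg at hgr₁
      rcases trichotomy₁ (hne.image _) hdir₁ htop₁ hgr₁ with
        ⟨g, hall₁, hunb₁⟩ | ⟨c, n, T, hfib₁, hunb₁⟩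
      · -- S₁ is an unbounded ℕ^ℕ-chain : always impossible
        exfalso
        by_cases hgr₂ : ∃ z ∈ Prod.snd '' D, ∀ s ∈ Prod.snd '' D, P2le i φ f s z
        · obtain ⟨y₁, hy₁mem, hy₁gr⟩ := hgr₂
          obtain ⟨dy, hdy, hdyeq⟩ := hy₁mem
          obtain ⟨M, hM⟩ := lev_bound₂ y₁
          obtain ⟨n₁, hn₁, hmem₁⟩ := hunb₁ (M + 1)
          obtain ⟨d', hd', hd'eq⟩ := hmem₁
          obtain ⟨d₃, hd₃, h13, h23⟩ := hdd d' hd' dy hdy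
          have e₂ : d₃.2 = y₁ := p2le_antisymm (hy₁gr d₃.2 ⟨d₃, hd₃, rfl⟩)
            (hdyeq ▸ h23.2)
          obtain ⟨n₃, h₃eq⟩ := hall₁ d₃.1 ⟨d₃, hd₃, rfl⟩
          have hn₁₃ : n₁ ≤ n₃ := by
            have h' := h13.1
            rw [hd'eq, h₃eq] at h'
            exact le_inl_le₁ h'
          obtain ⟨e, m, h1, h2⟩ := hD hd₃
          rw [h₃eq] at h1
          rw [e₂] at h2
          have hm : m ≤ M := hM e m h2
          rcases p1le_none_iff.mp h1 with ⟨b', habs, -⟩ | ⟨g₂, n₂, heq, hjm, -⟩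
          · exact absurd habs inl_ne_p1ofB
          · simp only [Sum.inl.injEq, Prod.mk.injEq] at heq
            obtain ⟨rfl, rfl⟩ := heq
            omega
        · push_neg at hgr₂
          rcases trichotomy₂ (hne.image _) hdir₂ htop₂ hgr₂ with
            ⟨hh, k, hall₂, hunb₂⟩ | ⟨c', n', T', hfib₂, hunb₂⟩
          · obtain ⟨n₁, hn₁, hmem₁⟩ := hunb₁ (k + 1)
            obtain ⟨d', hd', hd'eq⟩ := hmem₁
            obtain ⟨e, m, h1, h2⟩ := hD hd'
            rw [hd'eq] at h1
            obtain ⟨m₂, h₂eq⟩ := hall₂ d'.2 ⟨d', hd', rfl⟩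
            rw [h₂eq] at h2
            rcases p1le_none_iff.mp h1 with ⟨b', habs, -⟩ | ⟨g₂, n₂, heq, hjm, -⟩
            · exact absurd habs inl_ne_p1ofB
            rcases p2le_none_iff.mp h2 with ⟨b', habs, -⟩ | ⟨hh', n₄, k₂, heq', hkm, -⟩
            · exact absurd habs inl_ne_p2ofB
            simp only [Sum.inl.injEq, Prod.mk.injEq] at heq heq'
            obtain ⟨rfl, rfl⟩ := heq
            obtain ⟨rfl, rfl, rfl⟩ := heq'
            omega
          · obtain ⟨n₁, hn₁, hmem₁⟩ := hunb₁ (n' + 2)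
            obtain ⟨d', hd', hd'eq⟩ := hmem₁
            obtain ⟨e, m, h1, h2⟩ := hD hd'
            rw [hd'eq] at h1
            obtain ⟨ξ₂, h₂eq⟩ := hfib₂ d'.2 ⟨d', hd', rfl⟩
            rw [h₂eq] at h2
            have hlev := noneBelow_level (noneBelow_of_p2le h2)
            rcases p1le_none_iff.mp h1 with ⟨b', habs, -⟩ | ⟨g₂, n₂, heq, hjm, -⟩
            · exact absurd habs inl_ne_p1ofB
            simp only [Sum.inl.injEq, Prod.mk.injEq] at heq
            obtain ⟨rfl, rfl⟩ := heq
            omega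
      · -- S₁ is a fiber
        by_cases hgr₂ : ∃ z ∈ Prod.snd '' D, ∀ s ∈ Prod.snd '' D, P2le i φ f s z
        · -- (fiber, greatest) : LEMMA A'
          obtain ⟨y₁, hy₁mem, hy₁gr⟩ := hgr₂
          obtain ⟨dy, hdy, hdyeq⟩ := hy₁mem
          have HH : ∀ N, ∃ ξ, N < msr ξ ∧ ∃ e m,
              NoneBelow f (c, n, some (T, ξ)) e m ∧
              P2le i φ f y₁ (P2ofB i φ (e, m, (none : Lt))) := by
            intro N
            obtain ⟨ξ₁, hN₁, hmem₁⟩ := hunb₁ N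
            obtain ⟨d', hd', hd'eq⟩ := hmem₁
            obtain ⟨d₃, hd₃, h13, h23⟩ := hdd d' hd' dy hdy
            have e₂ : d₃.2 = y₁ := p2le_antisymm (hy₁gr d₃.2 ⟨d₃, hd₃, rfl⟩)
              (hdyeq ▸ h23.2)
            obtain ⟨ξ₃, h₃eq⟩ := hfib₁ d₃.1 ⟨d₃, hd₃, rfl⟩
            have hmle : Mle ξ₁ ξ₃ := by
              have h' := h13.1
              rw [hd'eq, h₃eq] at h'
              exact mle_of_fiber_le₁ h'
            obtain ⟨e, m, h1, h2⟩ := hD hd₃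
            rw [h₃eq] at h1
            rw [e₂] at h2
            exact ⟨ξ₃, lt_of_lt_of_le hN₁ (msr_mono hmle), e, m,
              noneBelow_of_p1le h1, h2⟩
          have hyle : P2le i φ f y₁ (P2ofB i φ (c, n, (none : Lt))) := by
            rcases hy : y₁ with ⟨hh, m₀, k⟩ | b | uu
            · have HK : ∀ N, ∃ ξ, N < msr ξ ∧ ∃ e m,
                  NoneBelow f (c, n, some (T, ξ)) e m ∧
                  (k = m ∧ ∃ m', m₀ ≤ m' ∧ hh.1 m' = e) := by
                intro N
                obtain ⟨ξ, hN, e, m, h1, h2⟩ := HH N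
                rw [hy] at h2
                rcases p2le_none_iff.mp h2 with ⟨b', habs, -⟩ |
                  ⟨hh', n₂, k₂, heq, hkm, hex⟩
                · exact absurd habs inl_ne_p2ofB
                · simp only [Sum.inl.injEq, Prod.mk.injEq] at heq
                  obtain ⟨rfl, rfl, rfl⟩ := heq
                  exact ⟨ξ, hN, e, m, h1, hkm, hex⟩
              obtain ⟨hk, m', hm₀, hm'c⟩ := K2_vs_fiber hif hφ HK
              exact p2le_none_iff.mpr (Or.inr ⟨hh, m₀, k, rfl, hk, m', hm₀, hm'c⟩)
            · have HB : ∀ N, ∃ ξ, N < msr ξ ∧ ∃ e m, NoneBelow f b e m ∧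
                  NoneBelow f (c, n, some (T, ξ)) e m := by
                intro N
                obtain ⟨ξ, hN, e, m, h1, h2⟩ := HH N
                rw [hy] at h2
                exact ⟨ξ, hN, e, m, noneBelow_of_p2le h2, h1⟩
              exact p2le_of_noneBelow (fixed_vs_fiber hif HB)
            · exact absurd (show P2top i φ ∈ Prod.snd '' D from
                ⟨dy, hdy, by rw [hdyeq, hy]; cases uu; rfl⟩) htop₂
          refine ⟨(P1ofB (c, n, (none : Lt)), y₁), ⟨c, n, p1le_refl _, hyle⟩,
            fun d hd => ⟨?_, hy₁gr d.2 ⟨d, hd, rfl⟩⟩⟩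
          obtain ⟨ξd, hdeq⟩ := hfib₁ d.1 ⟨d, hd, rfl⟩
          rw [hdeq]
          exact p1le_of_noneBelow (Or.inr (Or.inl ⟨T, ξd, rfl⟩))
        · push_neg at hgr₂
          rcases trichotomy₂ (hne.image _) hdir₂ htop₂ hgr₂ with
            ⟨hh, k, hall₂, hunb₂⟩ | ⟨c', n', T', hfib₂, hunb₂⟩
          · -- (fiber, K₂-chain) : impossible
            exfalso
            obtain ⟨m₁, hm₁, hmem₁⟩ := hunb₂ (max (idxOf i φ c) (pinv φ T) + 1)
            obtain ⟨d', hd', hd'eq⟩ := hmem₁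
            obtain ⟨e, m, h1, h2⟩ := hD hd'
            obtain ⟨ξ₁, h₁eq⟩ := hfib₁ d'.1 ⟨d', hd', rfl⟩
            rw [h₁eq] at h1
            rw [hd'eq] at h2
            rcases p2le_none_iff.mp h2 with ⟨b', habs, -⟩ |
              ⟨hh', n₄, k₂, heq', hkm, hex⟩
            · exact absurd habs inl_ne_p2ofB
            simp only [Sum.inl.injEq, Prod.mk.injEq] at heq'
            obtain ⟨rfl, rfl, rfl⟩ := heq'
            have := K2_bound_fiber hif hφ (noneBelow_of_p1le h1) hex
            omega
          · -- (fiber, fiber) : LEMMA B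
            have stage1 : ∀ ξ, P1ofB (c, n, some (T, ξ)) ∈ Prod.fst '' D →
                NoneBelow f (c, n, some (T, ξ)) c' n' := by
              intro ξ hmemξ
              obtain ⟨d₁, hd₁, hd₁eq⟩ := hmemξ
              apply fixed_vs_fiber hif
              intro N
              obtain ⟨ξ', hN', hmem'⟩ := hunb₂ N
              obtain ⟨d₂, hd₂, hd₂eq⟩ := hmem'
              obtain ⟨d₃, hd₃, h13, h23⟩ := hdd d₁ hd₁ d₂ hd₂
              obtain ⟨ξ₃, h₃eq⟩ := hfib₁ d₃.1 ⟨d₃, hd₃, rfl⟩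
              obtain ⟨ξ'₃, h'₃eq⟩ := hfib₂ d₃.2 ⟨d₃, hd₃, rfl⟩
              have hmle : Mle ξ ξ₃ := by
                have h' := h13.1
                rw [hd₁eq, h₃eq] at h'
                exact mle_of_fiber_le₁ h'
              have hmle' : Mle ξ' ξ'₃ := by
                have h' := h23.2
                rw [hd₂eq, h'₃eq] at h'
                exact mle_of_fiber_le₂ h'
              obtain ⟨e, m, h1, h2⟩ := hD hd₃
              rw [h₃eq] at h1
              rw [h'₃eq] at h2
              refine ⟨ξ'₃, lt_of_lt_of_le hN' (msr_mono hmle'), e, m, ?_,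
                noneBelow_of_p2le h2⟩
              exact noneBelow_of_p1le (p1le_trans_none (fiber_le₁ hmle) h1)
            have stage2 : c' = c ∧ n' = n := by
              apply fiber_below_none hif
              intro N
              obtain ⟨ξ, hN, hmemξ⟩ := hunb₁ N
              exact ⟨ξ, hN, stage1 ξ hmemξ⟩
            obtain ⟨rfl, rfl⟩ := stage2
            refine ⟨BD i φ c' n', BD_mem_CC c' n', fun d hd => ⟨?_, ?_⟩⟩
            · obtain ⟨ξd, hdeq⟩ := hfib₁ d.1 ⟨d, hd, rfl⟩
              rw [hdeq]
              exact p1le_of_noneBelow (Or.inr (Or.inl ⟨T, ξd, rfl⟩))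
            · obtain ⟨ξd, hdeq⟩ := hfib₂ d.2 ⟨d, hd, rfl⟩
              rw [hdeq]
              exact p2le_of_noneBelow (Or.inr (Or.inl ⟨T', ξd, rfl⟩))

end Closed


section Climb
variable {i : Pairt → Set ℕ} {f : Pairt → NWord → ℕ} {φ : ℕ → Pairt}

lemma mle_inr_src {w : NWord} {ζ : Mt} (h : Mle (Sum.inr w) ζ) :
    ∃ vζ, ζ = Sum.inr vζ ∧ wordLE w vζ := by
  cases ζ <;> simp_all [Mle]

lemma mle_inl_src {t : ℕ} {ζ : Mt} (h : Mle (Sum.inl t) ζ) :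
    ∃ tζ, ζ = Sum.inl tζ ∧ t ≤ tζ := by
  cases ζ <;> simp_all [Mle]

lemma wordLE_lt_length {v w : NWord} (h1 : wordLE v w) (h2 : v ≠ w) :
    v.1.length < w.1.length :=
  lt_of_le_of_ne h1.length_le fun he => h2 (Subtype.ext (h1.eq_of_length he))

/-- ub of a full `inl`-chain in `P₁` dominates the fiber top. -/
lemma inl_chain_lub₁ (hif : IFData i f) {c n : ℕ} {p : Pairt} {v : P1t}
    (h : ∀ t : ℕ, P1le f (P1ofB (c, n, some (p, Sum.inl t))) v) :
    P1le f (P1ofB (c, n, (none : Lt))) v := by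
  rcases v with ⟨g, j⟩ | b | uu
  · exfalso
    rcases le_inl₁ (h 0) with heq | ⟨j', hj', heq⟩ <;> exact absurd heq p1ofB_ne_inl
  · obtain ⟨e, m, ℓ⟩ := b
    rcases ℓ with _ | ⟨q, ζ⟩
    · rcases some_below_none (noneBelow_of_p1le (h 0)) with ⟨hec, hmn⟩ |
        ⟨w, v', habs, -⟩ | ⟨k, t', -, -, -, he, -⟩ | ⟨s, k, t', -, -, -, he, -⟩
      · exact Or.inl (by rw [hec, hmn]; rfl)
      · exact absurd habs (by simp)
      · rcases some_below_none (noneBelow_of_p1le (h (k + 1))) with ⟨hec, hmn⟩ |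
          ⟨w₂, v₂, habs, -⟩ | ⟨k₂, t₂, ht₂, -, -, he₂, hle₂⟩ |
          ⟨s₂, k₂, t₂, ht₂, -, -, he₂, hle₂⟩
        · exact Or.inl (by rw [hec, hmn]; rfl)
        · exact absurd habs (by simp)
        · exfalso
          obtain ⟨-, hww⟩ := ftag_eq hif (he.symm.trans he₂)
          have hkk := word1_inj hww
          simp only [Sum.inl.injEq] at ht₂
          omega
        · exfalso
          obtain ⟨-, hww⟩ := ftag_eq hif (he.symm.trans he₂)
          exact word1_ne_snoc hww
      · rcases some_below_none (noneBelow_of_p1le (h (k + 1))) with ⟨hec, hmn⟩ |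
          ⟨w₂, v₂, habs, -⟩ | ⟨k₂, t₂, ht₂, -, -, he₂, hle₂⟩ |
          ⟨s₂, k₂, t₂, ht₂, -, -, he₂, hle₂⟩
        · exact Or.inl (by rw [hec, hmn]; rfl)
        · exact absurd habs (by simp)
        · exfalso
          obtain ⟨-, hww⟩ := ftag_eq hif (he.symm.trans he₂)
          exact word1_ne_snoc hww.symm
        · exfalso
          obtain ⟨-, hww⟩ := ftag_eq hif (he.symm.trans he₂)
          obtain ⟨-, hkk⟩ := wordSnoc_inj hww
          simp only [Sum.inl.injEq] at ht₂
          omega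
    · exfalso
      have hm := h (msr ζ + 1)
      rcases le_some₁ hm with heq | ⟨ξ'', heq, hmlt⟩ <;>
        rw [p1ofB_inj] at heq <;>
        simp only [Prod.mk.injEq, Option.some.injEq] at heq
      · have := congrArg msr heq.2.2.2
        simp only [msr] at this
        omega
      · have h1 := msr_mono hmlt.1
        rw [← heq.2.2.2] at h1
        simp only [msr] at h1
        omega
  · cases uu
    exact p1le_top _

lemma inl_chain_lub₂ (hif : IFData i f) {c n : ℕ} {p : Pairt} {v : P2t i φ}
    (h : ∀ t : ℕ, P2le i φ f (P2ofB i φ (c, n, some (p, Sum.inl t))) v) :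
    P2le i φ f (P2ofB i φ (c, n, (none : Lt))) v := by
  rcases v with ⟨hh, j, k⟩ | b | uu
  · exfalso
    rcases le_inl₂ (h 0) with heq | ⟨j', hj', heq⟩ <;> exact absurd heq p2ofB_ne_inl
  · obtain ⟨e, m, ℓ⟩ := b
    rcases ℓ with _ | ⟨q, ζ⟩
    · rcases some_below_none (noneBelow_of_p2le (h 0)) with ⟨hec, hmn⟩ |
        ⟨w, v', habs, -⟩ | ⟨k', t', -, -, -, he, -⟩ | ⟨s, k', t', -, -, -, he, -⟩
      · exact Or.inl (by rw [hec, hmn]; rfl)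
      · exact absurd habs (by simp)
      · rcases some_below_none (noneBelow_of_p2le (h (k' + 1))) with ⟨hec, hmn⟩ |
          ⟨w₂, v₂, habs, -⟩ | ⟨k₂, t₂, ht₂, -, -, he₂, hle₂⟩ |
          ⟨s₂, k₂, t₂, ht₂, -, -, he₂, hle₂⟩
        · exact Or.inl (by rw [hec, hmn]; rfl)
        · exact absurd habs (by simp)
        · exfalso
          obtain ⟨-, hww⟩ := ftag_eq hif (he.symm.trans he₂)
          have hkk := word1_inj hww
          simp only [Sum.inl.injEq] at ht₂
          omega
        · exfalso
          obtain ⟨-, hww⟩ := ftag_eq hif (he.symm.trans he₂)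
          exact word1_ne_snoc hww
      · rcases some_below_none (noneBelow_of_p2le (h (k' + 1))) with ⟨hec, hmn⟩ |
          ⟨w₂, v₂, habs, -⟩ | ⟨k₂, t₂, ht₂, -, -, he₂, hle₂⟩ |
          ⟨s₂, k₂, t₂, ht₂, -, -, he₂, hle₂⟩
        · exact Or.inl (by rw [hec, hmn]; rfl)
        · exact absurd habs (by simp)
        · exfalso
          obtain ⟨-, hww⟩ := ftag_eq hif (he.symm.trans he₂)
          exact word1_ne_snoc hww.symm
        · exfalso
          obtain ⟨-, hww⟩ := ftag_eq hif (he.symm.trans he₂)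
          obtain ⟨-, hkk⟩ := wordSnoc_inj hww
          simp only [Sum.inl.injEq] at ht₂
          omega
    · exfalso
      have hm := h (msr ζ + 1)
      rcases le_some₂ hm with heq | ⟨ξ'', heq, hmlt⟩ <;>
        rw [p2ofB_inj] at heq <;>
        simp only [Prod.mk.injEq, Option.some.injEq] at heq
      · have := congrArg msr heq.2.2.2
        simp only [msr] at this
        omega
      · have h1 := msr_mono hmlt.1
        rw [← heq.2.2.2] at h1
        simp only [msr] at h1
        omega
  · cases uu
    exact p2le_top _

lemma Wchain_le {W : ℕ → NWord} (hW : ∀ j, wordLE (W j) (W (j + 1)) ∧ W j ≠ W (j + 1)) :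
    ∀ j j', j ≤ j' → wordLE (W j) (W j') := by
  intro j j' hjj
  induction j' with
  | zero =>
    have : j = 0 := by omega
    rw [this]
    exact wordLE_refl _
  | succ j' ih =>
    rcases Nat.lt_or_ge j (j' + 1) with hlt | hge
    · exact wordLE_trans (ih (by omega)) (hW j').1
    · have : j = j' + 1 := by omega
      rw [this]
      exact wordLE_refl _

lemma Wchain_len {W : ℕ → NWord} (hW : ∀ j, wordLE (W j) (W (j + 1)) ∧ W j ≠ W (j + 1)) :
    ∀ j, j < (W j).1.length := by
  intro j
  induction j with
  | zero => exact List.length_pos_iff.mpr (W 0).2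
  | succ j ih =>
    have := wordLE_lt_length (hW j).1 (hW j).2
    omega

/-- ub of a strictly increasing word chain in `P₁` dominates the fiber top. -/
lemma inr_chain_lub₁ (hif : IFData i f) {c n : ℕ} {p : Pairt} {v : P1t} {W : ℕ → NWord}
    (hW : ∀ j, wordLE (W j) (W (j + 1)) ∧ W j ≠ W (j + 1))
    (h : ∀ j : ℕ, P1le f (P1ofB (c, n, some (p, Sum.inr (W j)))) v) :
    P1le f (P1ofB (c, n, (none : Lt))) v := by
  rcases v with ⟨g, j⟩ | b | uu
  · exfalso
    rcases le_inl₁ (h 0) with heq | ⟨j', hj', heq⟩ <;> exact absurd heq p1ofB_ne_inl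
  · obtain ⟨e, m, ℓ⟩ := b
    rcases ℓ with _ | ⟨q, ζ⟩
    · rcases some_below_none (noneBelow_of_p1le (h ((wOf f p e).1.length))) with
        ⟨hec, hmn⟩ | ⟨w, v', hξ, -, -, he, hle⟩ | ⟨k, t', habs, -⟩ | ⟨s, k, t', habs, -⟩
      · exact Or.inl (by rw [hec, hmn]; rfl)
      · exfalso
        simp only [Sum.inr.injEq] at hξ
        have hw : w = wOf f p e := wOf_spec hif he.symm
        have hlen := hle.length_le
        rw [← hξ, hw] at hlen
        have := Wchain_len hW ((wOf f p e).1.length)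
        omega
      · exact absurd habs (by simp)
      · exact absurd habs (by simp)
    · exfalso
      have hmle : ∀ j, Mle (Sum.inr (W j)) ζ := by
        intro j
        rcases le_some₁ (h j) with heq | ⟨ξ'', heq, hmlt⟩ <;>
          rw [p1ofB_inj] at heq <;>
          simp only [Prod.mk.injEq, Option.some.injEq] at heq
        · rw [heq.2.2.2]
          exact Mle_refl _
        · rw [heq.2.2.2]
          exact hmlt.1
      obtain ⟨vζ, hζ, -⟩ := mle_inr_src (hmle 0)
      have h2 := hmle vζ.1.length
      rw [hζ] at h2
      have hle2 : wordLE (W vζ.1.length) vζ := by simpa [Mle] using h2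
      have h3 := Wchain_len hW vζ.1.length
      have h4 := hle2.length_le
      omega
  · cases uu
    exact p1le_top _

end Climb


section Climb2
variable {i : Pairt → Set ℕ} {f : Pairt → NWord → ℕ} {φ : ℕ → Pairt}

lemma inr_chain_lub₂ (hif : IFData i f) {c n : ℕ} {p : Pairt} {v : P2t i φ}
    {W : ℕ → NWord}
    (hW : ∀ j, wordLE (W j) (W (j + 1)) ∧ W j ≠ W (j + 1))
    (h : ∀ j : ℕ, P2le i φ f (P2ofB i φ (c, n, some (p, Sum.inr (W j)))) v) :
    P2le i φ f (P2ofB i φ (c, n, (none : Lt))) v := by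
  rcases v with ⟨hh, j, k⟩ | b | uu
  · exfalso
    rcases le_inl₂ (h 0) with heq | ⟨j', hj', heq⟩ <;> exact absurd heq p2ofB_ne_inl
  · obtain ⟨e, m, ℓ⟩ := b
    rcases ℓ with _ | ⟨q, ζ⟩
    · rcases some_below_none (noneBelow_of_p2le (h ((wOf f p e).1.length))) with
        ⟨hec, hmn⟩ | ⟨w, v', hξ, -, -, he, hle⟩ | ⟨k', t', habs, -⟩ | ⟨s, k', t', habs, -⟩
      · exact Or.inl (by rw [hec, hmn]; rfl)
      · exfalso
        simp only [Sum.inr.injEq] at hξ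
        have hw : w = wOf f p e := wOf_spec hif he.symm
        have hlen := hle.length_le
        rw [← hξ, hw] at hlen
        have := Wchain_len hW ((wOf f p e).1.length)
        omega
      · exact absurd habs (by simp)
      · exact absurd habs (by simp)
    · exfalso
      have hmle : ∀ j, Mle (Sum.inr (W j)) ζ := by
        intro j
        rcases le_some₂ (h j) with heq | ⟨ξ'', heq, hmlt⟩ <;>
          rw [p2ofB_inj] at heq <;>
          simp only [Prod.mk.injEq, Option.some.injEq] at heq
        · rw [heq.2.2.2]
          exact Mle_refl _
        · rw [heq.2.2.2]
          exact hmlt.1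
      obtain ⟨vζ, hζ, -⟩ := mle_inr_src (hmle 0)
      have h2 := hmle vζ.1.length
      rw [hζ] at h2
      have hle2 : wordLE (W vζ.1.length) vζ := by simpa [Mle] using h2
      have h3 := Wchain_len hW vζ.1.length
      have h4 := hle2.length_le
      omega
  · cases uu
    exact p2le_top _

end Climb2


section ClimbProd
variable {i : Pairt → Set ℕ} {f : Pairt → NWord → ℕ} {φ : ℕ → Pairt}

/-- diagonal fiber element of the product. -/
def diagS (i : Pairt → Set ℕ) (φ : ℕ → Pairt) (c n : ℕ) (p : Pairt) (ξ : Mt) :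
    P1t × P2t i φ :=
  (P1ofB (c, n, some (p, ξ)), P2ofB i φ (c, n, some (p, ξ)))

lemma diag_fiber_le {c n : ℕ} {p : Pairt} {ξ ξ' : Mt} (h : Mle ξ ξ') :
    prodLe i φ f (diagS i φ c n p ξ) (diagS i φ c n p ξ') :=
  ⟨fiber_le₁ h, fiber_le₂ h⟩

lemma diagS_le_BD {c n : ℕ} {p : Pairt} {ξ : Mt} :
    prodLe i φ f (diagS i φ c n p ξ) (BD i φ c n) :=
  ⟨p1le_of_noneBelow (Or.inr (Or.inl ⟨p, ξ, rfl⟩)),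
   p2le_of_noneBelow (Or.inr (Or.inl ⟨p, ξ, rfl⟩))⟩

lemma notin_up {A : Set (P1t × P2t i φ)} (hA : ScottClosed' (prodLe i φ f) A)
    {z z' : P1t × P2t i φ} (h : prodLe i φ f z z') (hz : z ∉ A) : z' ∉ A :=
  fun h' => hz (hA.1 _ _ h h')

lemma climb_inl (hif : IFData i f) {A : Set (P1t × P2t i φ)}
    (hA : ScottClosed' (prodLe i φ f) A) {c n : ℕ} (p : Pairt)
    (hnot : BD i φ c n ∉ A) : ∃ t, diagS i φ c n p (Sum.inl t) ∉ A := by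
  by_contra hall
  push_neg at hall
  apply hnot
  refine hA.2 (Set.range fun t => diagS i φ c n p (Sum.inl t)) (BD i φ c n) ?_ ?_ ?_
  · rintro z ⟨t, rfl⟩
    exact hall t
  · constructor
    · exact ⟨_, 0, rfl⟩
    · rintro x ⟨t, rfl⟩ y ⟨t', rfl⟩
      refine ⟨diagS i φ c n p (Sum.inl (max t t')), ⟨max t t', rfl⟩, ?_, ?_⟩
      · exact diag_fiber_le (by simp [Mle])
      · exact diag_fiber_le (by simp [Mle])
  · constructor
    · rintro z ⟨t, rfl⟩
      exact diagS_le_BD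
    · intro v hv
      exact ⟨inl_chain_lub₁ hif fun t => (hv _ ⟨t, rfl⟩).1,
        inl_chain_lub₂ hif fun t => (hv _ ⟨t, rfl⟩).2⟩

lemma climb_inr (hif : IFData i f) {A : Set (P1t × P2t i φ)}
    (hA : ScottClosed' (prodLe i φ f) A) {c n : ℕ} (p : Pairt) {W : ℕ → NWord}
    (hW : ∀ j, wordLE (W j) (W (j + 1)) ∧ W j ≠ W (j + 1))
    (hnot : BD i φ c n ∉ A) : ∃ j, diagS i φ c n p (Sum.inr (W j)) ∉ A := by
  by_contra hall
  push_neg at hall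
  apply hnot
  refine hA.2 (Set.range fun j => diagS i φ c n p (Sum.inr (W j))) (BD i φ c n) ?_ ?_ ?_
  · rintro z ⟨j, rfl⟩
    exact hall j
  · constructor
    · exact ⟨_, 0, rfl⟩
    · rintro x ⟨j, rfl⟩ y ⟨j', rfl⟩
      refine ⟨diagS i φ c n p (Sum.inr (W (max j j'))), ⟨max j j', rfl⟩, ?_, ?_⟩
      · exact diag_fiber_le (by
          show wordLE (W j) (W (max j j'))
          exact Wchain_le hW j _ (le_max_left _ _))
      · exact diag_fiber_le (by
          show wordLE (W j') (W (max j j'))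
          exact Wchain_le hW j' _ (le_max_right _ _))
  · constructor
    · rintro z ⟨j, rfl⟩
      exact diagS_le_BD
    · intro v hv
      exact ⟨inr_chain_lub₁ hif hW fun j => (hv _ ⟨j, rfl⟩).1,
        inr_chain_lub₂ hif hW fun j => (hv _ ⟨j, rfl⟩).2⟩

lemma up_sq2 {c n : ℕ} {p : Pairt} {w : NWord} (hc : c = p.1.1) :
    prodLe i φ f (diagS i φ c n p (Sum.inr w)) (BD i φ (f p w) (n + 1)) := by
  constructor
  · exact Or.inr (Or.inr (Or.inl ⟨(c, n, some (p, Sum.inr w)),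
      (f p w, n + 1, (none : Lt)), rfl, rfl,
      Or.inr (Or.inl ⟨n, p, w, by rw [hc], rfl⟩)⟩))
  · exact Or.inr (Or.inr (Or.inl ⟨(c, n, some (p, Sum.inr w)),
      (f p w, n + 1, (none : Lt)), rfl, rfl,
      Or.inr (Or.inl ⟨n, p, w, by rw [hc], rfl⟩)⟩))

lemma up_sq3 {c n t : ℕ} {p : Pairt} (hc : c = p.1.2) :
    prodLe i φ f (diagS i φ c n p (Sum.inl t)) (BD i φ (f p (word1 t)) (n + 1)) := by
  constructor
  · exact Or.inr (Or.inr (Or.inl ⟨(c, n, some (p, Sum.inl t)),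
      (f p (word1 t), n + 1, (none : Lt)), rfl, rfl,
      Or.inr (Or.inr (Or.inl ⟨n, t, p, by rw [hc], rfl⟩))⟩))
  · exact Or.inr (Or.inr (Or.inl ⟨(c, n, some (p, Sum.inl t)),
      (f p (word1 t), n + 1, (none : Lt)), rfl, rfl,
      Or.inr (Or.inr (Or.inl ⟨n, t, p, by rw [hc], rfl⟩))⟩))

lemma up_sq4 {c n t : ℕ} {p : Pairt} {s : NWord} (hc : c = f p s) :
    prodLe i φ f (diagS i φ c n p (Sum.inl t)) (BD i φ (f p (wordSnoc s t)) n) := by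
  constructor
  · exact Or.inr (Or.inr (Or.inl ⟨(c, n, some (p, Sum.inl t)),
      (f p (wordSnoc s t), n, (none : Lt)), rfl, rfl,
      Or.inr (Or.inr (Or.inr (Or.inl ⟨n, t, p, s, by rw [hc], rfl⟩)))⟩))
  · exact Or.inr (Or.inr (Or.inl ⟨(c, n, some (p, Sum.inl t)),
      (f p (wordSnoc s t), n, (none : Lt)), rfl, rfl,
      Or.inr (Or.inr (Or.inr (Or.inl ⟨n, t, p, s, by rw [hc], rfl⟩)))⟩))

end ClimbProd


section Irred
variable {i : Pairt → Set ℕ} {f : Pairt → NWord → ℕ} {φ : ℕ → Pairt}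

/-- constant words. -/
def Wrep : ℕ → NWord := fun j => ⟨List.replicate (j + 1) 0, by simp⟩

lemma Wrep_chain : ∀ j, wordLE (Wrep j) (Wrep (j + 1)) ∧ Wrep j ≠ Wrep (j + 1) := by
  intro j
  constructor
  · show List.replicate (j + 1) 0 <+: List.replicate (j + 2) 0
    refine ⟨[0], ?_⟩
    rw [← List.replicate_succ' (n := j + 1)]
  · intro h
    have := congrArg (fun w : NWord => w.1.length) h
    simp [Wrep] at this

lemma wordLE_self_snoc {w : NWord} {r : ℕ} : wordLE w (wordSnoc w r) := ⟨[r], rfl⟩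

lemma ne_self_snoc {w : NWord} {r : ℕ} : w ≠ wordSnoc w r := by
  intro h
  have := congrArg (fun w : NWord => w.1.length) h
  simp [wordSnoc] at this

lemma inj_unbounded {u : ℕ → ℕ} (hu : Function.Injective u) (N j₀ : ℕ) :
    ∃ j, j₀ ≤ j ∧ N < u j := by
  by_contra h
  push_neg at h
  have hmap : ∀ j ∈ Finset.range (N + 2), u (j₀ + j) ∈ Finset.range (N + 1) := by
    intro j hj
    exact Finset.mem_range.mpr (by have := h (j₀ + j) (Nat.le_add_right _ _); omega)
  have hinj : Set.InjOn (fun j => u (j₀ + j)) (Finset.range (N + 2)) := by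
    intro a _ b _ hab
    have := hu hab
    omega
  have := Finset.card_le_card_of_injOn _ hmap hinj
  simp at this

lemma raise (hif : IFData i f) {A : Set (P1t × P2t i φ)}
    (hA : ScottClosed' (prodLe i φ f) A) {e m : ℕ} (hnot : BD i φ e m ∉ A) :
    ∃ e', BD i φ e' (m + 1) ∉ A := by
  obtain ⟨j, hj⟩ := climb_inr hif hA (⟨(e, e + 1), by omega⟩ : Pairt) Wrep_chain hnot
  exact ⟨f ⟨(e, e + 1), by omega⟩ (Wrep j), notin_up hA (up_sq2 rfl) hj⟩

lemma raise_to (hif : IFData i f) {A : Set (P1t × P2t i φ)}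
    (hA : ScottClosed' (prodLe i φ f) A) {e m : ℕ} (hnot : BD i φ e m ∉ A)
    (N : ℕ) (hN : m ≤ N) : ∃ e', BD i φ e' N ∉ A := by
  induction N with
  | zero =>
    have h0 : m = 0 := by omega
    exact ⟨e, h0 ▸ hnot⟩
  | succ N ih =>
    rcases Nat.lt_or_ge m (N + 1) with hlt | hge
    · obtain ⟨e', he'⟩ := ih (by omega)
      exact raise hif hA he'
    · have h0 : m = N + 1 := by omega
      exact ⟨e, h0 ▸ hnot⟩

lemma CC_irred (hif : IFData i f) (hφ : Function.Bijective φ) :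
    ∀ A B : Set (P1t × P2t i φ), ScottClosed' (prodLe i φ f) A →
      ScottClosed' (prodLe i φ f) B → CC i φ f ⊆ A ∪ B →
      CC i φ f ⊆ A ∨ CC i φ f ⊆ B := by
  intro A B hA hB hAB
  by_contra hcon
  push_neg at hcon
  obtain ⟨hnA, hnB⟩ := hcon
  obtain ⟨zA, hzA, hzA'⟩ := Set.not_subset.mp hnA
  obtain ⟨zB, hzB, hzB'⟩ := Set.not_subset.mp hnB
  obtain ⟨e₁, m₁, h11, h12⟩ := hzA
  obtain ⟨e₂, m₂, h21, h22⟩ := hzB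
  have hBDA : BD i φ e₁ m₁ ∉ A := notin_up hA ⟨h11, h12⟩ hzA'
  have hBDB : BD i φ e₂ m₂ ∉ B := notin_up hB ⟨h21, h22⟩ hzB'
  -- equalize levels
  obtain ⟨d₁, hd₁⟩ := raise_to hif hA hBDA (max m₁ m₂) (le_max_left _ _)
  obtain ⟨d₂, hd₂⟩ := raise_to hif hB hBDB (max m₁ m₂) (le_max_right _ _)
  set N := max m₁ m₂ with hNdef
  -- A-side entry
  obtain ⟨j₁, hj₁⟩ := climb_inr hif hA (⟨(d₁, d₁ + 1), by omega⟩ : Pairt) Wrep_chain hd₁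
  set c₁ := f (⟨(d₁, d₁ + 1), by omega⟩ : Pairt) (Wrep j₁) with hc₁def
  have hc₁ : BD i φ c₁ (N + 1) ∉ A := notin_up hA (up_sq2 rfl) hj₁
  -- B-side entry, with value above c₁
  obtain ⟨j₂, hj₂⟩ := climb_inr hif hB (⟨(d₂, d₂ + 1), by omega⟩ : Pairt) Wrep_chain hd₂
  have hcone : ∀ j, j₂ ≤ j →
      BD i φ (f (⟨(d₂, d₂ + 1), by omega⟩ : Pairt) (Wrep j)) (N + 1) ∉ B := by
    intro j hj
    refine notin_up hB (up_sq2 rfl) (notin_up hB (diag_fiber_le ?_) hj₂)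
    show wordLE (Wrep j₂) (Wrep j)
    exact Wchain_le Wrep_chain j₂ j hj
  have huinj : Function.Injective
      (fun j => f (⟨(d₂, d₂ + 1), by omega⟩ : Pairt) (Wrep j)) := by
    intro a b hab
    have := hif.finj _ hab
    have := congrArg (fun w : NWord => w.1.length) this
    simp [Wrep] at this
    omega
  obtain ⟨j₃, hj₃ge, hj₃gt⟩ := inj_unbounded huinj c₁ j₂
  set c₂ := f (⟨(d₂, d₂ + 1), by omega⟩ : Pairt) (Wrep j₃) with hc₂def
  have hc₂ : BD i φ c₂ (N + 1) ∉ B := hcone j₃ hj₃ge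
  set pst : Pairt := ⟨(c₁, c₂), hj₃gt⟩ with hpst
  -- B-side entry into the common tag
  obtain ⟨t₀, ht₀⟩ := climb_inl hif hB pst hc₂
  have hV0 : BD i φ (f pst (word1 t₀)) (N + 2) ∉ B :=
    notin_up hB (up_sq3 rfl) ht₀
  -- B-side recursion
  have hstep : ∀ w : NWord, BD i φ (f pst w) (N + 2) ∉ B →
      ∃ r, BD i φ (f pst (wordSnoc w r)) (N + 2) ∉ B := by
    intro w hw
    obtain ⟨r, hr⟩ := climb_inl hif hB pst hw
    exact ⟨r, notin_up hB (up_sq4 rfl) hr⟩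
  let V : ℕ → {w : NWord // BD i φ (f pst w) (N + 2) ∉ B} := fun j =>
    Nat.rec ⟨word1 t₀, hV0⟩
      (fun _ prev => ⟨wordSnoc prev.1 (hstep prev.1 prev.2).choose,
        (hstep prev.1 prev.2).choose_spec⟩) j
  have hVchain : ∀ j, wordLE ((V j).1) ((V (j + 1)).1) ∧ (V j).1 ≠ (V (j + 1)).1 := by
    intro j
    exact ⟨wordLE_self_snoc, ne_self_snoc⟩
  -- A-side final collision
  obtain ⟨jA, hjA⟩ := climb_inr hif hA pst hVchain hc₁
  have hfinA : BD i φ (f pst ((V jA).1)) (N + 2) ∉ A :=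
    notin_up hA (up_sq2 rfl) hjA
  have hfinB : BD i φ (f pst ((V jA).1)) (N + 2) ∉ B := (V jA).2
  rcases hAB (BD_mem_CC (f pst ((V jA).1)) (N + 2)) with h | h
  · exact hfinA h
  · exact hfinB h

end Irred


/-- The Scott space `Σ(P₁ × P₂)` of the product poset `P₁ × P₂` is not sober. -/
theorem P1_prod_P2_scott_not_sober (i : Pairt → Set ℕ) (f : Pairt → NWord → ℕ)
    (φ : ℕ → Pairt) (hif : IFData i f) (hφ : Function.Bijective φ) :
    ¬ SoberRel (prodLe i φ f) := by
  rintro ⟨hT0, hsob⟩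
  obtain ⟨z, hz, -⟩ := hsob (CC i φ f) (CC_closed hif hφ)
    ⟨BD i φ 0 0, BD_mem_CC 0 0⟩ (CC_irred hif hφ)
  have h0 : prodLe i φ f (BD i φ 0 0) z := by
    have := BD_mem_CC (i := i) (φ := φ) (f := f) 0 0
    rw [hz] at this
    exact this
  have h1 : prodLe i φ f (BD i φ 1 0) z := by
    have := BD_mem_CC (i := i) (φ := φ) (f := f) 1 0
    rw [hz] at this
    exact this
  have hzz : z ∈ CC i φ f := by
    rw [hz]
    exact ⟨p1le_refl _, p2le_refl _⟩
  rcases none_le₁ h0.1 with hz1 | hz1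
  · rcases none_le₁ h1.1 with hz1' | hz1'
    · rw [hz1] at hz1'
      rw [p1ofB_inj] at hz1'
      simp at hz1'
    · exact absurd hz1' (CC_fst_ne_top hzz)
  · exact absurd hz1 (CC_fst_ne_top hzz)
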